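/- arXiv:2209.03686 — 7 statements merged into one kernel-verified Lean document; each statement's English description precedes it below -/
import Mathlib

section
/- Let K ⊆ L be fields with L algebraic and separable over K. Let D = (D_n)_{n≥0} and D′ = (D′_n)_{n≥0} be two families of additive maps L → L such that D_0 = D′_0 = id, both families satisfy the Leibniz rule D_n(fg) = Σ_{ℓ=0}^{n} D_ℓ(f)·D_{n−ℓ}(g) for all f, g ∈ L and n ≥ 0, and D_n(a) = D′_n(a) for every a ∈ K and every n ≥ 0. Then D_n = D′_n for all n ≥ 0; that is, a Hasse–Schmidt derivation extending a given one on K to a separable algebraic extension L is unique. -/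
/-- A Hasse–Schmidt derivation on a field `L` extending a given one on a subfield `K` over
which `L` is separable algebraic is unique: if two families of additive maps `L → L`, both
having `D 0 = id` and both satisfying the Leibniz rule, agree on `K`, then they coincide. -/
theorem hasse_schmidt_ext_unique (K L : Type*) [Field K] [Field L] [Algebra K L]
    [Algebra.IsSeparable K L]
    (D D' : ℕ → L →+ L)
    (hD0 : D 0 = AddMonoidHom.id L) (hD'0 : D' 0 = AddMonoidHom.id L)
    (hLeib : ∀ (n : ℕ) (f g : L),
      D n (f * g) = ∑ ℓ ∈ Finset.range (n + 1), D ℓ f * D (n - ℓ) g)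
    (hLeib' : ∀ (n : ℕ) (f g : L),
      D' n (f * g) = ∑ ℓ ∈ Finset.range (n + 1), D' ℓ f * D' (n - ℓ) g)
    (hagree : ∀ (n : ℕ) (a : K), D n (algebraMap K L a) = D' n (algebraMap K L a)) :
    ∀ n : ℕ, D n = D' n := by
  intro n
  induction n using Nat.strong_induction_on with
  | _ n ih =>
    match n with
    | 0 => rw [hD0, hD'0]
    | Nat.succ m =>
      -- The difference is an ordinary K-derivation on L.
      set E : L → L := fun x => D (m + 1) x - D' (m + 1) x with hEdef
      have hEadd : ∀ x y : L, E (x + y) = E x + E y := by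
        intro x y; simp only [hEdef, map_add]; ring
      have hEK : ∀ a : K, E (algebraMap K L a) = 0 := by
        intro a; simp only [hEdef, hagree (m + 1) a, sub_self]
      have hELeib : ∀ f g : L, E (f * g) = f * E g + E f * g := by
        intro f g
        have h1 : ∑ ℓ ∈ Finset.range (m + 1 + 1), D ℓ f * D (m + 1 - ℓ) g
            = f * D (m + 1) g + (∑ i ∈ Finset.range m, D (i + 1) f * D (m - i) g)
              + D (m + 1) f * g := by
          rw [Finset.sum_range_succ, Finset.sum_range_succ']
          simp only [Nat.succ_sub_succ, Nat.sub_self, Nat.sub_zero, hD0,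
            AddMonoidHom.id_apply]
          ring
        have h2 : ∑ ℓ ∈ Finset.range (m + 1 + 1), D' ℓ f * D' (m + 1 - ℓ) g
            = f * D' (m + 1) g + (∑ i ∈ Finset.range m, D' (i + 1) f * D' (m - i) g)
              + D' (m + 1) f * g := by
          rw [Finset.sum_range_succ, Finset.sum_range_succ']
          simp only [Nat.succ_sub_succ, Nat.sub_self, Nat.sub_zero, hD'0,
            AddMonoidHom.id_apply]
          ring
        have hmid : ∀ i ∈ Finset.range m,
            D (i + 1) f * D (m - i) g = D' (i + 1) f * D' (m - i) g := by
          intro i hi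
          rw [Finset.mem_range] at hi
          rw [ih (i + 1) (by omega), ih (m - i) (by omega)]
        simp only [hEdef]
        rw [hLeib, hLeib', h1, h2, Finset.sum_congr rfl hmid]
        ring
      have hEsmul : ∀ (a : K) (x : L), E (a • x) = a • E x := by
        intro a x
        rw [Algebra.smul_def, hELeib, hEK, Algebra.smul_def]
        ring
      set Ed : Derivation K L L :=
        { toFun := E
          map_add' := hEadd
          map_smul' := hEsmul
          map_one_eq_zero' := by
            show E 1 = 0
            have h1 : E (1 * 1) = 1 * E 1 + E 1 * 1 := hELeib 1 1
            rw [one_mul] at h1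
            linear_combination -h1
          leibniz' := by
            intro a b
            show E (a * b) = a • E b + b • E a
            rw [hELeib, smul_eq_mul, smul_eq_mul]
            ring } with hEddef
      ext x
      -- A `K`-derivation on a separable algebraic extension vanishes.
      have hint : IsIntegral K x := Algebra.IsIntegral.isIntegral x
      have hpx : Polynomial.aeval x (minpoly K x) = 0 := minpoly.aeval K x
      have hd : Ed (Polynomial.aeval x (minpoly K x))
          = Polynomial.aeval x (Polynomial.derivative (minpoly K x)) • Ed x :=
        Derivation.map_aeval Ed (minpoly K x) x
      rw [hpx, map_zero] at hd
      have hne : Polynomial.aeval x (Polynomial.derivative (minpoly K x)) ≠ 0 :=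
        (Algebra.IsSeparable.isSeparable K x).aeval_derivative_ne_zero (minpoly.aeval K x)
      have hEx : Ed x = 0 := by
        rcases smul_eq_zero.mp hd.symm with h | h
        · exact absurd h hne
        · exact h
      have hEx' : D (m + 1) x - D' (m + 1) x = 0 := hEx
      have := sub_eq_zero.mp hEx'
      simpa using this
end

section
/- Let K be a field equipped with an additive valuation v : K → ℤ ∪ {+∞}. Let D ≥ 1 and ℓ with 1 ≤ ℓ ≤ D be integers, let N be an integer, and let M be a D × D matrix over K such that: v(M_{i,j}) ≥ 0 for all 1 ≤ i ≤ D − ℓ and 1 ≤ j ≤ D, and v(M_{D−ℓ+i′, j}) ≥ N + i′ − j for all 1 ≤ i′ ≤ ℓ and 1 ≤ j ≤ D. Then v(det M) ≥ ℓ·(N + ℓ − D). -/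
theorem aux_sum_card : ∀ (T : Finset ℕ), ∑ k ∈ Finset.range T.card, k ≤ ∑ x ∈ T, x := by
  intro T
  induction T using Finset.strongInduction with
  | _ T ih =>
    rcases T.eq_empty_or_nonempty with rfl | hT
    · simp
    · set m := T.max' hT with hm
      have hmem : m ∈ T := T.max'_mem hT
      have hc : 1 ≤ T.card := Finset.card_pos.2 hT
      have h1 : (T.erase m).card = T.card - 1 := Finset.card_erase_of_mem hmem
      have hsub : T ⊆ Finset.range (m + 1) := fun x hx =>
        Finset.mem_range.2 (Nat.lt_succ_of_le (T.le_max' x hx))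
      have hcard : T.card ≤ m + 1 := by simpa using Finset.card_le_card hsub
      have ih' := ih (T.erase m) (Finset.erase_ssubset hmem)
      have hsum : ∑ x ∈ T.erase m, x + m = ∑ x ∈ T, x := Finset.sum_erase_add T _ hmem
      have hr : T.card = (T.card - 1) + 1 := by omega
      rw [hr, Finset.sum_range_succ]
      rw [h1] at ih'
      omega

/-- The key combinatorial inequality for a single permutation. -/
theorem aux_perm_sum (D ℓ : ℕ) (hℓD : ℓ ≤ D) (N : ℤ) (σ : Equiv.Perm (Fin D)) :
    (ℓ : ℤ) * (N + (ℓ : ℤ) - (D : ℤ)) ≤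
      ∑ i ∈ Finset.univ.filter (fun i => D - ℓ ≤ ((σ i : Fin D) : ℕ)),
        (N + (((σ i : Fin D) : ℕ) : ℤ) + 1 - ((D : ℤ) - (ℓ : ℤ)) - (((i : ℕ) : ℤ) + 1)) := by
  classical
  set m := D - ℓ with hm
  set A : Finset (Fin D) := Finset.univ.filter (fun i => m ≤ ((σ i : Fin D) : ℕ)) with hA
  set S : Finset (Fin D) := Finset.univ.filter (fun j : Fin D => m ≤ (j : ℕ)) with hS
  have hmemA : ∀ i, i ∈ A ↔ m ≤ ((σ i : Fin D) : ℕ) := by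
    intro i; simp [hA]
  have hmemS : ∀ j, j ∈ S ↔ m ≤ (j : ℕ) := by
    intro j; simp [hS]
  have hAS : A.card = S.card := by
    apply Finset.card_bij (fun i _ => σ i)
    · intro a ha; rw [hmemS]; exact (hmemA a).1 ha
    · intro a _ b _ h; exact σ.injective h
    · intro b hb
      exact ⟨σ.symm b, (hmemA _).2 (by simpa using (hmemS b).1 hb), by simp⟩
  have hfilter_range : ∀ (f : ℕ → ℕ), ∑ j ∈ S, f (j : ℕ) = ∑ k ∈ Finset.Ico m D, f k := by
    intro f
    rw [hS, Finset.sum_filter, Fin.sum_univ_eq_sum_range (fun k => if m ≤ k then f k else 0),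
      ← Finset.sum_filter]
    congr 1
    ext k
    simp [Finset.mem_Ico]
    omega
  have hcardS : S.card = ℓ := by
    have h1 : S.card = ∑ j ∈ S, 1 := by simp
    rw [h1, hfilter_range (fun _ => 1)]
    simp [Nat.card_Ico]
    omega
  have hcardA : A.card = ℓ := by rw [hAS, hcardS]
  have hIco : ∑ k ∈ Finset.range m, k + ∑ k ∈ Finset.Ico m D, k = ∑ k ∈ Finset.range D, k := by
    simp only [Finset.range_eq_Ico]
    exact Finset.sum_Ico_consecutive _ (Nat.zero_le m) (by omega)
  have hsumAS : ∑ i ∈ A, ((σ i : Fin D) : ℕ) = ∑ j ∈ S, (j : ℕ) := by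
    apply Finset.sum_bij (fun i _ => σ i)
    · intro a ha; rw [hmemS]; exact (hmemA a).1 ha
    · intro a _ b _ h; exact σ.injective h
    · intro b hb
      exact ⟨σ.symm b, (hmemA _).2 (by simpa using (hmemS b).1 hb), by simp⟩
    · intro a _; rfl
  have hsumS : ∑ i ∈ A, ((σ i : Fin D) : ℕ) + ∑ k ∈ Finset.range m, k
      = ∑ k ∈ Finset.range D, k := by
    have h := hfilter_range (fun k => k)
    rw [hsumAS, h]
    omega
  have hsumA : ∑ i ∈ A, (i : ℕ) + ∑ k ∈ Finset.range m, k ≤ ∑ k ∈ Finset.range D, k := by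
    set B : Finset (Fin D) := Finset.univ.filter (fun i => ¬ m ≤ ((σ i : Fin D) : ℕ)) with hB
    have hsplit : ∑ i ∈ A, (i : ℕ) + ∑ i ∈ B, (i : ℕ) = ∑ i : Fin D, (i : ℕ) :=
      Finset.sum_filter_add_sum_filter_not _ _ _
    have huniv : ∑ i : Fin D, (i : ℕ) = ∑ k ∈ Finset.range D, k :=
      Fin.sum_univ_eq_sum_range (fun k => k) D
    have hcardB : B.card = m := by
      have := Finset.card_filter_add_card_filter_not
        (s := (Finset.univ : Finset (Fin D)))
        (p := fun i => m ≤ ((σ i : Fin D) : ℕ))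
      rw [← hA, ← hB] at this
      simp only [Finset.card_univ, Fintype.card_fin] at this
      omega
    set T : Finset ℕ := B.image (fun i : Fin D => (i : ℕ)) with hT
    have hTcard : T.card = m := by
      rw [hT, Finset.card_image_of_injective _ Fin.val_injective, hcardB]
    have hTsum : ∑ x ∈ T, x = ∑ i ∈ B, (i : ℕ) :=
      Finset.sum_image (fun a _ b _ h => Fin.val_injective h)
    have := aux_sum_card T
    rw [hTcard, hTsum] at this
    omega
  -- now the integer arithmetic
  have expand : ∑ i ∈ A, (N + (((σ i : Fin D) : ℕ) : ℤ) + 1 - ((D : ℤ) - (ℓ : ℤ)) - (((i : ℕ) : ℤ) + 1))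
      = (A.card : ℤ) * (N - ((D : ℤ) - (ℓ : ℤ)))
        + ((∑ i ∈ A, ((σ i : Fin D) : ℕ) : ℕ) : ℤ) - ((∑ i ∈ A, (i : ℕ) : ℕ) : ℤ) := by
    push_cast
    simp only [Finset.sum_sub_distrib, Finset.sum_add_distrib, Finset.sum_const,
      nsmul_eq_mul]
    ring
  rw [expand, hcardA]
  have h1 : (∑ i ∈ A, (i : ℕ)) ≤ ∑ i ∈ A, ((σ i : Fin D) : ℕ) := by omega
  have h2 : ((∑ i ∈ A, (i : ℕ) : ℕ) : ℤ) ≤ ((∑ i ∈ A, ((σ i : Fin D) : ℕ) : ℕ) : ℤ) := by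
    exact_mod_cast h1
  have h3 : ((D : ℤ) - (ℓ : ℤ)) = (m : ℤ) := by
    rw [hm]; push_cast; omega
  have h4 : (ℓ : ℤ) * (N + (ℓ : ℤ) - (D : ℤ)) = (ℓ : ℤ) * (N - ((D : ℤ) - (ℓ : ℤ))) := by ring
  rw [h4]
  linarith

/-- Let `v` be an additive valuation on a field `K`, `1 ≤ ℓ ≤ D`, `N ∈ ℤ`, and let `M` be a
`D × D` matrix over `K` (rows and columns indexed `1,…,D` via `Fin D`, so the row/column
numbered `i` corresponds to the index `i-1 : Fin D`).  If all the entries in the first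
`D - ℓ` rows have `v ≥ 0`, and the entry in row `D - ℓ + i'` and column `j` (`1 ≤ i' ≤ ℓ`,
`1 ≤ j ≤ D`) has `v ≥ N + i' - j`, then `v (det M) ≥ ℓ * (N + ℓ - D)`. -/
theorem valuation_det_lower_bound (K : Type*) [Field K]
    (v : K → WithTop ℤ)
    (hmul : ∀ x y : K, v (x * y) = v x + v y)
    (hadd : ∀ x y : K, min (v x) (v y) ≤ v (x + y))
    (hzero : v 0 = ⊤)
    (D ℓ : ℕ) (hD : 1 ≤ D) (hℓ1 : 1 ≤ ℓ) (hℓD : ℓ ≤ D) (N : ℤ)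
    (M : Matrix (Fin D) (Fin D) K)
    (htop : ∀ i j : Fin D, (i : ℕ) < D - ℓ → (0 : WithTop ℤ) ≤ v (M i j))
    (hbot : ∀ i j : Fin D, D - ℓ ≤ (i : ℕ) →
      ((N + ((i : ℕ) : ℤ) + 1 - ((D : ℤ) - (ℓ : ℤ)) - (((j : ℕ) : ℤ) + 1) : ℤ) : WithTop ℤ)
        ≤ v (M i j)) :
    (((ℓ : ℤ) * (N + (ℓ : ℤ) - (D : ℤ)) : ℤ) : WithTop ℤ) ≤ v M.det := by
  classical
  by_cases h1 : v 1 = ⊤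
  · have hd : v M.det = ⊤ := by
      have h := hmul M.det 1
      rw [mul_one, h1, add_top] at h
      exact h
    rw [hd]; exact le_top
  have hv1 : v 1 = 0 := by
    have h := hmul 1 1
    rw [mul_one] at h
    lift v 1 to ℤ using h1 with a ha
    rw [← WithTop.coe_add, WithTop.coe_eq_coe] at h
    rw [WithTop.coe_eq_zero]
    omega
  have hneg1 : v (-1 : K) = 0 := by
    have h := hmul (-1 : K) (-1 : K)
    rw [neg_mul_neg, one_mul, hv1] at h
    by_cases ht : v (-1 : K) = ⊤
    · rw [ht, add_top] at h; exact absurd h.symm (by simp)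
    · lift v (-1 : K) to ℤ using ht with a ha
      rw [← WithTop.coe_add, eq_comm, WithTop.coe_eq_zero] at h
      rw [WithTop.coe_eq_zero]
      omega
  have vsum : ∀ (s : Finset (Equiv.Perm (Fin D))) (f : Equiv.Perm (Fin D) → K)
      (c : WithTop ℤ), (∀ a ∈ s, c ≤ v (f a)) → c ≤ v (∑ a ∈ s, f a) := by
    intro s
    induction s using Finset.cons_induction with
    | empty => intro f c _; simp [hzero]
    | cons a s ha ih =>
      intro f c h
      rw [Finset.sum_cons]
      refine le_trans ?_ (hadd _ _)
      exact le_min (h a (Finset.mem_cons_self a s))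
        (ih f c fun b hb => h b (Finset.mem_cons_of_mem hb))
  have vprod : ∀ (f : Fin D → K), v (∏ i, f i) = ∑ i, v (f i) := by
    intro f
    induction (Finset.univ : Finset (Fin D)) using Finset.cons_induction with
    | empty => simp [hv1]
    | cons a s ha ih => rw [Finset.prod_cons, Finset.sum_cons, hmul, ih]
  rw [Matrix.det_apply']
  apply vsum
  intro σ _
  rw [hmul]
  have hsign : v (((Equiv.Perm.sign σ : ℤ) : K)) = 0 := by
    rcases Int.units_eq_one_or (Equiv.Perm.sign σ) with h | h <;> rw [h] <;>
      simp [hv1, hneg1]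
  rw [hsign, zero_add, vprod]
  set m := D - ℓ with hm
  set A : Finset (Fin D) := Finset.univ.filter (fun i => m ≤ ((σ i : Fin D) : ℕ)) with hA
  have hsplit : ∑ i, v (M (σ i) i) =
      (∑ i ∈ A, v (M (σ i) i))
        + ∑ i ∈ Finset.univ.filter (fun i => ¬ m ≤ ((σ i : Fin D) : ℕ)), v (M (σ i) i) :=
    (Finset.sum_filter_add_sum_filter_not _ _ _).symm
  rw [hsplit]
  have hA2 : (0 : WithTop ℤ) ≤
      ∑ i ∈ Finset.univ.filter (fun i => ¬ m ≤ ((σ i : Fin D) : ℕ)), v (M (σ i) i) := by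
    apply Finset.sum_nonneg
    intro i hi
    rw [Finset.mem_filter] at hi
    exact htop (σ i) i (by omega)
  set g : Fin D → ℤ :=
    fun i => N + (((σ i : Fin D) : ℕ) : ℤ) + 1 - ((D : ℤ) - (ℓ : ℤ)) - (((i : ℕ) : ℤ) + 1)
    with hg
  have hA1 : ((∑ i ∈ A, g i : ℤ) : WithTop ℤ) ≤ ∑ i ∈ A, v (M (σ i) i) := by
    rw [WithTop.coe_sum]
    apply Finset.sum_le_sum
    intro i hi
    rw [Finset.mem_filter] at hi
    exact hbot (σ i) i hi.2
  have key : (ℓ : ℤ) * (N + (ℓ : ℤ) - (D : ℤ)) ≤ ∑ i ∈ A, g i :=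
    aux_perm_sum D ℓ hℓD N σ
  calc ((((ℓ : ℤ) * (N + (ℓ : ℤ) - (D : ℤ))) : ℤ) : WithTop ℤ)
      ≤ ((∑ i ∈ A, g i : ℤ) : WithTop ℤ) := by exact_mod_cast key
    _ ≤ (∑ i ∈ A, v (M (σ i) i)) + 0 := by rw [add_zero]; exact hA1
    _ ≤ _ := add_le_add le_rfl hA2
end

section
/- Let k be a field of characteristic p ≥ 0, K = k((t)) the field of formal Laurent series over k with t-adic valuation v. Let e ≥ 1 be an integer and let x = t^e + Σ_{m>e} b_m t^m ∈ k[[t]] (so b_e = 1). Assume there exists an integer m with b_m ≠ 0 and m not divisible by p (no condition on p-divisibility when p = 0), and let r be the least such integer; note r ≥ e. Let D = (D_n)_{n≥0} be a Hasse–Schmidt derivation on K over k such that each D_n is continuous for the t-adic topology, D_1(x) = 1, and D_n(x) = 0 for all n ≥ 2. Then for every nonzero f ∈ K and every integer n ≥ 1, v(D_n(f)) ≥ (n−1)e − (2n−1)r + v(f). -/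
/-!
Write `t = single 1 1` and `w n = (n - 1) e - (2n - 1) r` for `n ≥ 1`, `w 0 = 0`; the weight `w` is
subadditive because `e ≤ r`. By strong induction on `n` one shows `v (D_n t) ≥ 1 + w n`. Given
the bound below `n`, the Leibniz rule yields `D_n (t^m) ≡ m t^(m-1) D_n t` modulo order
`m + w n + (r - e)`, so by continuity `D_n x ≡ x' · D_n t` modulo order `w n + r`. Since `D_n x`
is `1` or `0` it has order `≥ w n + r`, while `x'` has order exactly `r - 1`: the exponents of `x`
below `r` are killed by differentiation. Hence `v (D_n t) ≥ 1 + w n`. The Leibniz rule then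
bounds `D_n` on powers of `t` and, through `t · t⁻¹ = 1`, on all monomials `t^m` by `m + w n`;
continuity of `D_n` extends this to every Laurent series.
-/

open scoped Classical in
/-- The additive (t-adic) valuation on `k((t))`, with `v 0 = ⊤`. -/
noncomputable def addVal {k : Type*} [Field k] (f : LaurentSeries k) : WithTop ℤ :=
  if f = 0 then ⊤ else (f.order : WithTop ℤ)

namespace HahnSeries

variable {Γ R : Type*} [LinearOrder Γ]

theorem le_orderTop_add [AddMonoid R] {x y : HahnSeries Γ R} {a : WithTop Γ}
    (hx : a ≤ x.orderTop) (hy : a ≤ y.orderTop) : a ≤ (x + y).orderTop :=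
  (le_min hx hy).trans min_orderTop_le_orderTop_add

theorem le_orderTop_sub [AddGroup R] {x y : HahnSeries Γ R} {a : WithTop Γ}
    (hx : a ≤ x.orderTop) (hy : a ≤ y.orderTop) : a ≤ (x - y).orderTop :=
  (le_min hx hy).trans min_orderTop_le_orderTop_sub

theorem le_orderTop_sum [AddCommMonoid R] {ι : Type*} {s : Finset ι} {x : ι → HahnSeries Γ R}
    {a : WithTop Γ} (h : ∀ i ∈ s, a ≤ (x i).orderTop) : a ≤ (∑ i ∈ s, x i).orderTop := by
  classical
  induction s using Finset.induction_on with
  | empty => simp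
  | insert i s hi ih =>
    rw [Finset.sum_insert hi]
    exact le_orderTop_add (h i (by simp)) (ih fun j hj => h j (by simp [hj]))

theorem le_orderTop_mul [AddCommMonoid Γ] [IsOrderedCancelAddMonoid Γ]
    [NonUnitalNonAssocSemiring R] {x y : HahnSeries Γ R} {a b : WithTop Γ}
    (hx : a ≤ x.orderTop) (hy : b ≤ y.orderTop) : a + b ≤ (x * y).orderTop :=
  (add_le_add hx hy).trans orderTop_add_le_mul

theorem coe_order_le_orderTop [Zero R] [Zero Γ] (x : HahnSeries Γ R) :
    (x.order : WithTop Γ) ≤ x.orderTop := by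
  rcases eq_or_ne x 0 with rfl | hx
  · simp
  · rw [order_eq_orderTop_of_ne_zero hx]

end HahnSeries

namespace LaurentSeries

open HahnSeries Filter Topology

section Derivative

variable {R V : Type*} [Semiring R] [AddCommGroup V] [Module R V]

theorem coeff_derivative (f : LaurentSeries V) (n : ℤ) :
    (derivative R f).coeff n = (n + 1) • f.coeff (n + 1) := by
  simp

theorem le_orderTop_derivative {f : LaurentSeries V} {N : ℤ}
    (hf : (N : WithTop ℤ) ≤ f.orderTop) :
    ((N - 1 : ℤ) : WithTop ℤ) ≤ (derivative R f).orderTop := by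
  rw [le_orderTop_iff_forall] at hf ⊢
  intro j hj
  have hj : j < N - 1 := WithTop.coe_lt_coe.1 hj
  rw [coeff_derivative, hf (j + 1) (WithTop.coe_lt_coe.2 (by omega)), smul_zero]

end Derivative

theorem le_orderTop_of_le_orderTop_mul {R : Type*} [Semiring R] [NoZeroDivisors R]
    {u y : LaurentSeries R} {B N : ℤ} (hu : u.orderTop = B)
    (h : (N : WithTop ℤ) ≤ (u * y).orderTop) : ((N - B : ℤ) : WithTop ℤ) ≤ y.orderTop := by
  rw [orderTop_mul, hu] at h
  generalize y.orderTop = a at h ⊢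
  induction a using WithTop.recTopCoe with
  | top => exact le_top
  | coe a =>
    rw [← WithTop.coe_add, WithTop.coe_le_coe] at h
    exact WithTop.coe_le_coe.2 (by omega)

variable {k : Type*} [Field k]

theorem derivative_single_one (m : ℤ) :
    derivative k (single m (1 : k)) = single (m - 1) (m : k) := by
  simp

theorem orderTop_derivative_eq {x : LaurentSeries k} {r : ℤ} (hr : x.coeff r ≠ 0)
    (hrp : ¬ (ringChar k : ℤ) ∣ r)
    (hmin : ∀ m : ℤ, x.coeff m ≠ 0 → ¬ (ringChar k : ℤ) ∣ m → r ≤ m) :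
    (derivative k x).orderTop = (r - 1 : ℤ) := by
  have hcast : ∀ m : ℤ, (m : k) = 0 ↔ (ringChar k : ℤ) ∣ m := CharP.intCast_eq_zero_iff k _
  refine le_antisymm (orderTop_le_of_coeff_ne_zero ?_) ?_
  · rw [coeff_derivative, sub_add_cancel, zsmul_eq_mul]
    exact mul_ne_zero (mt (hcast r).1 hrp) hr
  · rw [le_orderTop_iff_forall]
    intro j hj
    have hj : j < r - 1 := WithTop.coe_lt_coe.1 hj
    rw [coeff_derivative, zsmul_eq_mul]
    by_cases hx : x.coeff (j + 1) = 0
    · rw [hx, mul_zero]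
    · have hp : (ringChar k : ℤ) ∣ j + 1 := by
        by_contra hp
        have := hmin _ hx hp
        omega
      rw [(hcast _).2 (by exact_mod_cast hp), zero_mul]

theorem valuation_le_exp_neg_iff {f : LaurentSeries k} {N : ℤ} :
    Valued.v f ≤ WithZero.exp (-N) ↔ (N : WithTop ℤ) ≤ f.orderTop := by
  rw [valuation_le_iff_coeff_lt_eq_zero, le_orderTop_iff_forall]
  simp

theorem hasBasis_nhds_zero_orderTop :
    (𝓝 (0 : LaurentSeries k)).HasBasis (fun _ : ℤ => True)
      fun N => {g | (N : WithTop ℤ) ≤ g.orderTop} := by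
  refine (Valued.hasBasis_nhds_zero _ _).to_hasBasis (fun γ _ => ?_) (fun N _ => ?_)
  · have hc : MonoidWithZeroHom.ValueGroup₀.embedding γ.1 ≠ 0 := by simp
    refine ⟨1 - WithZero.log (MonoidWithZeroHom.ValueGroup₀.embedding γ.1), trivial,
      fun g hg => ?_⟩
    rw [Set.mem_ofPred_eq, Valuation.restrict_lt_iff_lt_embedding, ← WithZero.exp_log hc]
    exact (valuation_le_exp_neg_iff.2 hg).trans_lt (WithZero.exp_lt_exp.2 (by omega))
  · refine ⟨Units.mk0 (Valued.v.restrict (single N (1 : k))) (by simp), trivial, fun g hg => ?_⟩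
    rw [Set.mem_ofPred_eq, Units.val_mk0, Valuation.restrict_lt_iff, valuation_single_zpow] at hg
    exact valuation_le_exp_neg_iff.1 hg.le

/-- Continuity at `0` for the `t`-adic topology, phrased through orders; unlike `Continuous` it is
checked directly for maps such as `g ↦ derivative g * y`. -/
def IsOrderTopContinuous (φ : LaurentSeries k → LaurentSeries k) : Prop :=
  ∀ N : ℤ, ∃ M : ℤ, ∀ g : LaurentSeries k,
    (M : WithTop ℤ) ≤ g.orderTop → (N : WithTop ℤ) ≤ (φ g).orderTop

theorem _root_.Continuous.isOrderTopContinuous {φ : LaurentSeries k → LaurentSeries k}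
    (hφ : Continuous φ) (h0 : φ 0 = 0) : IsOrderTopContinuous φ := fun N => by
  obtain ⟨M, -, hM⟩ := (hasBasis_nhds_zero_orderTop.tendsto_iff hasBasis_nhds_zero_orderTop).1
    (hφ.tendsto' 0 0 h0) N trivial
  exact ⟨M, hM⟩

theorem isOrderTopContinuous_of_le_orderTop {φ : LaurentSeries k → LaurentSeries k} (c : ℤ)
    (h : ∀ (N : ℤ) g, (N : WithTop ℤ) ≤ g.orderTop →
      ((N + c : ℤ) : WithTop ℤ) ≤ (φ g).orderTop) :
    IsOrderTopContinuous φ :=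
  fun N => ⟨N - c, fun g hg => by simpa using h _ g hg⟩

theorem IsOrderTopContinuous.sub {φ ψ : LaurentSeries k → LaurentSeries k}
    (hφ : IsOrderTopContinuous φ) (hψ : IsOrderTopContinuous ψ) :
    IsOrderTopContinuous fun g => φ g - ψ g := fun N => by
  obtain ⟨M, hM⟩ := hφ N
  obtain ⟨M', hM'⟩ := hψ N
  refine ⟨max M M', fun g hg => le_orderTop_sub (hM g ?_) (hM' g ?_)⟩ <;>
    exact le_trans (by simp) hg

theorem le_orderTop_sub_sum_single {f : LaurentSeries k} {N : ℤ}
    (hf : (N : WithTop ℤ) ≤ f.orderTop) (M : ℤ) :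
    (M : WithTop ℤ) ≤ (f - ∑ m ∈ Finset.Ico N M, f.coeff m • single m (1 : k)).orderTop := by
  rw [le_orderTop_iff_forall]
  intro j hj
  by_cases hjN : N ≤ j
  · simp_all [coeff_sum, coeff_single]
  · simp [coeff_sum, coeff_single, coeff_eq_zero_of_lt_orderTop
      ((WithTop.coe_lt_coe.2 (not_le.1 hjN)).trans_le hf), hjN]

theorem IsOrderTopContinuous.le_orderTop_apply {φ : LaurentSeries k →ₗ[k] LaurentSeries k}
    (hφ : IsOrderTopContinuous φ) {N c : ℤ}
    (h : ∀ m, N ≤ m → ((m + c : ℤ) : WithTop ℤ) ≤ (φ (single m 1)).orderTop)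
    {f : LaurentSeries k} (hf : (N : WithTop ℤ) ≤ f.orderTop) :
    ((N + c : ℤ) : WithTop ℤ) ≤ (φ f).orderTop := by
  obtain ⟨M, hM⟩ := hφ (N + c)
  rw [← sub_add_cancel f (∑ m ∈ Finset.Ico N M, f.coeff m • single m (1 : k)), map_add, map_sum]
  refine le_orderTop_add (hM _ (le_orderTop_sub_sum_single hf M))
    (le_orderTop_sum fun m hm => ?_)
  have hm := (Finset.mem_Ico.1 hm).1
  rw [map_smul]
  exact le_trans (le_trans (by simpa using hm) (h m hm)) (orderTop_le_orderTop_smul _ _)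

end LaurentSeries

structure IsHasseSchmidt {R A : Type*} [Semiring R] [CommRing A] [Module R A]
    (D : ℕ → A →ₗ[R] A) : Prop where
  zero_eq_id : D 0 = LinearMap.id
  leibniz : ∀ (n : ℕ) (f g : A), D n (f * g) = ∑ ℓ ∈ Finset.range (n + 1), D ℓ f * D (n - ℓ) g

def hsWeight (e r : ℤ) : ℕ → ℤ
  | 0 => 0
  | j + 1 => j * e - (2 * j + 1) * r

theorem hsWeight_succ_add_succ (e r : ℤ) (a b : ℕ) :
    hsWeight e r (a + 1) + hsWeight e r (b + 1) = hsWeight e r (a + b + 1 + 1) + (r - e) := by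
  simp only [hsWeight]
  push_cast
  ring

theorem hsWeight_add_le {e r : ℤ} (h : e ≤ r) (a b : ℕ) :
    hsWeight e r (a + b) ≤ hsWeight e r a + hsWeight e r b := by
  rcases a with _ | a
  · simp [hsWeight]
  rcases b with _ | b
  · simp [hsWeight]
  rw [hsWeight_succ_add_succ, show a + 1 + (b + 1) = a + b + 1 + 1 by omega]
  omega

namespace IsHasseSchmidt

open HahnSeries LaurentSeries

section CommRing

variable {R A : Type*} [Semiring R] [CommRing A] [Module R A] {D : ℕ → A →ₗ[R] A}

theorem apply_zero (hD : IsHasseSchmidt D) (f : A) : D 0 f = f := by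
  rw [hD.zero_eq_id, LinearMap.id_apply]

theorem map_one (hD : IsHasseSchmidt D) {j : ℕ} (hj : j ≠ 0) : D j 1 = 0 := by
  induction j using Nat.strong_induction_on with
  | _ j ih =>
    have h := hD.leibniz j 1 1
    rw [one_mul, Finset.sum_range_succ, Finset.sum_eq_single_of_mem 0
      (by simpa [Nat.pos_iff_ne_zero]) fun ℓ hℓ hℓ0 => by
        rw [ih ℓ (Finset.mem_range.1 hℓ) hℓ0, zero_mul]] at h
    simpa [hD.apply_zero] using h

theorem map_mul_succ (hD : IsHasseSchmidt D) (n : ℕ) (f g : A) :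
    D (n + 1) (f * g) = f * D (n + 1) g + D (n + 1) f * g +
      ∑ ℓ ∈ Finset.range n, D (ℓ + 1) f * D (n - ℓ) g := by
  rw [hD.leibniz, Finset.sum_range_succ, Finset.sum_range_succ', Nat.sub_self, Nat.sub_zero,
    hD.apply_zero, hD.apply_zero]
  simp only [Nat.add_sub_add_right]
  ring

end CommRing

variable {k : Type*} [Field k] {D : ℕ → LaurentSeries k →ₗ[k] LaurentSeries k} {w : ℕ → ℤ}

theorem le_orderTop_apply_mul (hD : IsHasseSchmidt D) (hw : ∀ a b, w (a + b) ≤ w a + w b)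
    {j : ℕ} {f g : LaurentSeries k} {A B : ℤ}
    (hf : ∀ ℓ ≤ j, ((A + w ℓ : ℤ) : WithTop ℤ) ≤ (D ℓ f).orderTop)
    (hg : ∀ ℓ ≤ j, ((B + w ℓ : ℤ) : WithTop ℤ) ≤ (D ℓ g).orderTop) :
    ((A + B + w j : ℤ) : WithTop ℤ) ≤ (D j (f * g)).orderTop := by
  rw [hD.leibniz]
  refine le_orderTop_sum fun ℓ hℓ => ?_
  have hℓ : ℓ ≤ j := Nat.lt_succ_iff.1 (Finset.mem_range.1 hℓ)
  refine le_trans ?_ (le_orderTop_mul (hf ℓ hℓ) (hg (j - ℓ) (Nat.sub_le _ _)))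
  have := hw ℓ (j - ℓ)
  rw [Nat.add_sub_cancel' hℓ] at this
  rw [← WithTop.coe_add, WithTop.coe_le_coe]
  linarith

theorem le_orderTop_apply_pow (hD : IsHasseSchmidt D) (hw : ∀ a b, w (a + b) ≤ w a + w b)
    (hw0 : w 0 ≤ 0) {j : ℕ} {f : LaurentSeries k} {B : ℤ}
    (hf : ∀ ℓ ≤ j, ((B + w ℓ : ℤ) : WithTop ℤ) ≤ (D ℓ f).orderTop) (m : ℕ) :
    ∀ ℓ ≤ j, ((m * B + w ℓ : ℤ) : WithTop ℤ) ≤ (D ℓ (f ^ m)).orderTop := by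
  induction m with
  | zero =>
    rintro (_ | ℓ) -
    · simpa [hD.apply_zero] using hw0
    · simp [hD.map_one]
  | succ m ih =>
    intro ℓ hℓ
    rw [pow_succ]
    refine le_trans (WithTop.coe_le_coe.2 (le_of_eq ?_))
      (hD.le_orderTop_apply_mul hw (fun i hi => ih i (hi.trans hℓ)) fun i hi => hf i (hi.trans hℓ))
    push_cast
    ring

theorem le_orderTop_apply_inv (hD : IsHasseSchmidt D) (hw : ∀ a b, w (a + b) ≤ w a + w b)
    (hw0 : w 0 ≤ 0) {u : LaurentSeries k} {B : ℤ} (hu : u.orderTop = B) {j : ℕ}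
    (hb : ∀ ℓ ≤ j, ((B + w ℓ : ℤ) : WithTop ℤ) ≤ (D ℓ u).orderTop) :
    ∀ ℓ ≤ j, ((-B + w ℓ : ℤ) : WithTop ℤ) ≤ (D ℓ u⁻¹).orderTop := by
  have hu0 : u ≠ 0 := by rintro rfl; simp at hu
  intro ℓ hℓ
  induction ℓ using Nat.strong_induction_on with
  | _ ℓ ih =>
  rcases ℓ with _ | i
  · have := le_orderTop_of_le_orderTop_mul (y := u⁻¹) (N := 0) hu
      (by rw [mul_inv_cancel₀ hu0, orderTop_one, WithTop.coe_zero])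
    rw [hD.apply_zero]
    exact le_trans (WithTop.coe_le_coe.2 (by omega)) this
  · have h := hD.leibniz (i + 1) u u⁻¹
    rw [mul_inv_cancel₀ hu0, hD.map_one (by simp), Finset.sum_range_succ', hD.apply_zero,
      Nat.sub_zero, eq_comm, ← eq_neg_iff_add_eq_zero] at h
    refine le_trans (WithTop.coe_le_coe.2 (by omega))
      (le_orderTop_of_le_orderTop_mul (N := w (i + 1)) hu ?_)
    rw [← neg_neg (u * _), ← h, orderTop_neg]
    refine le_orderTop_sum fun l hl => ?_
    have hl : l ≤ i := Nat.lt_succ_iff.1 (Finset.mem_range.1 hl)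
    rw [show i + 1 - (l + 1) = i - l by omega]
    refine le_trans ?_ (le_orderTop_mul (hb (l + 1) (by omega)) (ih (i - l) (by omega) (by omega)))
    have := hw (l + 1) (i - l)
    rw [show l + 1 + (i - l) = i + 1 by omega] at this
    rw [← WithTop.coe_add, WithTop.coe_le_coe]
    linarith

theorem le_orderTop_apply_single (hD : IsHasseSchmidt D) (hw : ∀ a b, w (a + b) ≤ w a + w b)
    (hw0 : w 0 ≤ 0) {n : ℕ}
    (hT : ∀ j ≤ n, ((1 + w j : ℤ) : WithTop ℤ) ≤ (D j (single 1 1)).orderTop) (m : ℤ) :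
    ∀ j ≤ n, ((m + w j : ℤ) : WithTop ℤ) ≤ (D j (single m 1)).orderTop := by
  rw [RatFunc.single_zpow]
  cases m with
  | ofNat a => simpa using hD.le_orderTop_apply_pow hw hw0 hT a
  | negSucc a =>
    have hu : (single (1 : ℤ) (1 : k) ^ (a + 1)).orderTop = ((a + 1 : ℕ) : ℤ) := by
      rw [single_pow, one_pow, orderTop_single one_ne_zero]
      simp
    have hpow : ∀ ℓ ≤ n, ((((a + 1 : ℕ) : ℤ) + w ℓ : ℤ) : WithTop ℤ) ≤
        (D ℓ (single 1 1 ^ (a + 1))).orderTop := by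
      simpa using hD.le_orderTop_apply_pow hw hw0 hT (a + 1)
    intro j hj
    rw [zpow_negSucc, Int.negSucc_eq]
    convert hD.le_orderTop_apply_inv hw hw0 hu hpow j hj using 3
    push_cast
    ring

variable {e r : ℤ}

theorem le_orderTop_apply_single_sub_mul (hD : IsHasseSchmidt D) (her : e ≤ r) {n : ℕ}
    (hT : ∀ j ≤ n, ((1 + hsWeight e r j : ℤ) : WithTop ℤ) ≤ (D j (single 1 1)).orderTop)
    {m : ℤ} (hm : 1 ≤ m) :
    ((m + hsWeight e r (n + 1) + (r - e) : ℤ) : WithTop ℤ) ≤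
      (D (n + 1) (single m 1) - single (m - 1) (m : k) * D (n + 1) (single 1 1)).orderTop := by
  set T : LaurentSeries k := single 1 1
  induction m, hm using Int.leInduction with
  | base => simp [T]
  | succ m hm ih =>
    have hsingle : single (m + 1) (1 : k) = single m 1 * T := by simp [T, single_mul_single]
    have hcoeff : single m ((m + 1 : ℤ) : k) = single (m - 1) (m : k) * T + single m 1 := by
      rw [single_mul_single, sub_add_cancel, mul_one, ← single_add]
      push_cast
      rfl
    have hsplit :
        D (n + 1) (single (m + 1) 1) - single (m + 1 - 1) ((m + 1 : ℤ) : k) * D (n + 1) T =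
          (D (n + 1) (single m 1) - single (m - 1) (m : k) * D (n + 1) T) * T +
            ∑ ℓ ∈ Finset.range n, D (ℓ + 1) (single m 1) * D (n - ℓ) T := by
      rw [hsingle, hD.map_mul_succ, add_sub_cancel_right, hcoeff]
      ring
    rw [hsplit]
    refine le_orderTop_add ?_ (le_orderTop_sum fun ℓ hℓ => ?_)
    · have h := le_orderTop_mul ih (orderTop_single_le (a := (1 : ℤ)) (r := (1 : k)))
      rw [← WithTop.coe_add] at h
      exact le_trans (WithTop.coe_le_coe.2 (by omega)) h
    · obtain ⟨d, rfl⟩ := Nat.exists_eq_add_of_lt (Finset.mem_range.1 hℓ)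
      rw [show ℓ + d + 1 - ℓ = d + 1 by omega]
      refine le_trans ?_ (le_orderTop_mul (hD.le_orderTop_apply_single (hsWeight_add_le her)
        le_rfl hT m (ℓ + 1) (by omega)) (hT (d + 1) (by omega)))
      rw [← WithTop.coe_add, WithTop.coe_le_coe]
      have := hsWeight_succ_add_succ e r ℓ d
      omega

theorem le_orderTop_apply_X (hD : IsHasseSchmidt D) (hcont : ∀ n, IsOrderTopContinuous (D n))
    (he : 1 ≤ e) (her : e ≤ r) {x : LaurentSeries k} (hxe : (e : WithTop ℤ) ≤ x.orderTop)
    (hx' : (derivative k x).orderTop = (r - 1 : ℤ)) (hx1 : D 1 x = 1)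
    (hx2 : ∀ n, 2 ≤ n → D n x = 0) (n : ℕ) :
    ((1 + hsWeight e r n : ℤ) : WithTop ℤ) ≤ (D n (single 1 1)).orderTop := by
  induction n using Nat.strong_induction_on with
  | _ n ih =>
  rcases n with _ | n
  · simp [hD.apply_zero, hsWeight, orderTop_single]
  set y := D (n + 1) (single 1 1)
  -- reducibly the one coming from `Algebra k (LaurentSeries k)`.
  let L : LaurentSeries k →ₗ[k] LaurentSeries k :=
    { toFun := fun g => g * y
      map_add' := fun f g => add_mul f g y
      map_smul' := fun c g => by
        simp only [RingHom.id_apply, ← single_zero_mul_eq_smul, mul_assoc] }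
  let E : LaurentSeries k →ₗ[k] LaurentSeries k := D (n + 1) - L ∘ₗ derivative k
  have hL : ∀ (N : ℤ) (g : LaurentSeries k), (N : WithTop ℤ) ≤ g.orderTop →
      ((N + (y.order - 1) : ℤ) : WithTop ℤ) ≤ (derivative k g * y).orderTop := fun N g hg => by
    have h := le_orderTop_mul (le_orderTop_derivative (R := k) hg) (coe_order_le_orderTop y)
    rw [← WithTop.coe_add] at h
    exact le_trans (WithTop.coe_le_coe.2 (by omega)) h
  have hE : IsOrderTopContinuous E :=
    (hcont (n + 1)).sub (isOrderTopContinuous_of_le_orderTop (y.order - 1) hL)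
  have hEx : ((e + (hsWeight e r (n + 1) + r - e) : ℤ) : WithTop ℤ) ≤ (E x).orderTop := by
    refine hE.le_orderTop_apply (fun m hm => ?_) hxe
    have h := hD.le_orderTop_apply_single_sub_mul her (n := n) (fun j hj => ih j (by omega))
      (m := m) (by omega)
    simp only [E, L, LinearMap.sub_apply, LinearMap.comp_apply, LinearMap.coe_mk, AddHom.coe_mk,
      derivative_single_one]
    exact le_trans (WithTop.coe_le_coe.2 (by omega)) h
  have hDx : ((hsWeight e r (n + 1) + r : ℤ) : WithTop ℤ) ≤ (D (n + 1) x).orderTop := by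
    rcases n with _ | n
    · simp [hx1, hsWeight]
    · simp [hx2 (n + 1 + 1) (by omega)]
  have hprod : derivative k x * y = D (n + 1) x - E x := by simp [E, L]
  have h := le_orderTop_of_le_orderTop_mul hx' (hprod ▸ le_orderTop_sub hDx (by simpa using hEx))
  exact le_trans (WithTop.coe_le_coe.2 (by omega)) h

end IsHasseSchmidt

theorem addVal_eq_orderTop {k : Type*} [Field k] (f : LaurentSeries k) :
    addVal f = f.orderTop := by
  unfold addVal
  split_ifs with hf
  · simp [hf]
  · rw [HahnSeries.order_eq_orderTop_of_ne_zero hf]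

theorem hasse_schmidt_val_lower_bound_finite_general (k : Type*) [Field k]
    (e : ℤ) (he : 1 ≤ e) (x : LaurentSeries k)
    (hxlow : ∀ m : ℤ, m < e → x.coeff m = 0)
    (r : ℤ)
    (hr : x.coeff r ≠ 0 ∧ ¬ ((ringChar k : ℤ) ∣ r))
    (hrmin : ∀ m : ℤ, x.coeff m ≠ 0 → ¬ ((ringChar k : ℤ) ∣ m) → r ≤ m)
    (D : ℕ → LaurentSeries k →ₗ[k] LaurentSeries k)
    (hD0 : D 0 = LinearMap.id)
    (hLeib : ∀ (n : ℕ) (f g : LaurentSeries k),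
      D n (f * g) = ∑ ℓ ∈ Finset.range (n + 1), D ℓ f * D (n - ℓ) g)
    (hcont : ∀ n : ℕ, Continuous (D n))
    (hx1 : D 1 x = 1) (hx2 : ∀ n : ℕ, 2 ≤ n → D n x = 0)
    (f : LaurentSeries k) (n : ℕ) (hn : 1 ≤ n) :
    (((((n : ℤ) - 1) * e - (2 * (n : ℤ) - 1) * r + f.order : ℤ)) : WithTop ℤ)
      ≤ addVal (D n f) := by
  have hD : IsHasseSchmidt D := ⟨hD0, hLeib⟩
  have her : e ≤ r := le_of_not_gt fun h => hr.1 (hxlow r h)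
  have hcont' n := (hcont n).isOrderTopContinuous (map_zero (D n))
  have hxe : (e : WithTop ℤ) ≤ x.orderTop :=
    HahnSeries.le_orderTop_iff_forall.2 fun m hm => hxlow m (WithTop.coe_lt_coe.1 hm)
  have hX := hD.le_orderTop_apply_X hcont' he her hxe
    (LaurentSeries.orderTop_derivative_eq hr.1 hr.2 hrmin) hx1 hx2
  have hmonomial (m : ℤ) :=
    hD.le_orderTop_apply_single (hsWeight_add_le her) le_rfl (fun j _ => hX j) m n le_rfl
  have hDf := (hcont' n).le_orderTop_apply (fun m _ => hmonomial m)
    (HahnSeries.coe_order_le_orderTop f)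
  obtain ⟨n, rfl⟩ := Nat.exists_eq_add_of_le' hn
  rw [addVal_eq_orderTop]
  refine le_trans (WithTop.coe_le_coe.2 (le_of_eq ?_)) hDf
  simp only [hsWeight]
  push_cast
  ring

/-- Let `k` be a field of characteristic `p ≥ 0` and `K = k((t))` with t-adic valuation `v`.
Let `x = t^e + Σ_{m>e} b_m t^m` (`e ≥ 1`), let `r` be the least integer `m` with `b_m ≠ 0`
and `p ∤ m`, and let `D` be a Hasse–Schmidt derivation on `K` over `k`, continuous for the
t-adic topology, with `D 1 x = 1` and `D n x = 0` for `n ≥ 2`.  Then for every nonzero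
`f ∈ K` and every `n ≥ 1`, `v (D n f) ≥ (n-1)e - (2n-1)r + v f`. -/
theorem hasse_schmidt_val_lower_bound_finite (k : Type*) [Field k]
    (e : ℤ) (he : 1 ≤ e) (x : LaurentSeries k)
    (hxe : x.coeff e = 1)
    (hxlow : ∀ m : ℤ, m < e → x.coeff m = 0)
    (r : ℤ)
    (hr : x.coeff r ≠ 0 ∧ ¬ ((ringChar k : ℤ) ∣ r))
    (hrmin : ∀ m : ℤ, x.coeff m ≠ 0 → ¬ ((ringChar k : ℤ) ∣ m) → r ≤ m)
    (D : ℕ → LaurentSeries k →ₗ[k] LaurentSeries k)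
    (hD0 : D 0 = LinearMap.id)
    (hLeib : ∀ (n : ℕ) (f g : LaurentSeries k),
      D n (f * g) = ∑ ℓ ∈ Finset.range (n + 1), D ℓ f * D (n - ℓ) g)
    (hcont : ∀ n : ℕ, Continuous (D n))
    (hx1 : D 1 x = 1) (hx2 : ∀ n : ℕ, 2 ≤ n → D n x = 0)
    (f : LaurentSeries k) (hf : f ≠ 0) (n : ℕ) (hn : 1 ≤ n) :
    (((((n : ℤ) - 1) * e - (2 * (n : ℤ) - 1) * r + f.order : ℤ)) : WithTop ℤ)
      ≤ addVal (D n f) :=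
  hasse_schmidt_val_lower_bound_finite_general k e he x hxlow r hr hrmin D hD0 hLeib hcont hx1 hx2 f
    n hn
end

section
/- Let k be a field of characteristic p ≥ 0, K = k((t)) the field of formal Laurent series over k with t-adic valuation v. Let d ≥ 1 be an integer and let x ∈ K be a nonzero element such that 1/x = t^d + Σ_{m>d} b_m t^m ∈ k[[t]] (so b_d = 1). Assume there exists an integer m with b_m ≠ 0 and m not divisible by p (no condition when p = 0), and let r be the least such integer; note r ≥ d. Let D = (D_n)_{n≥0} be a Hasse–Schmidt derivation on K over k such that each D_n is continuous for the t-adic topology, D_1(x) = 1, and D_n(x) = 0 for all n ≥ 2. Then for every nonzero f ∈ K and every integer n ≥ 1, v(D_n(f)) ≥ (3n−1)d − (2n−1)r + v(f). -/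
-- Closed before the main theorem, where `open HahnSeries` would make `addVal` ambiguous.
section

open HahnSeries Finset Filter Topology

namespace LaurentSeries

section Ring

variable {R : Type*} [Ring R]

def VanishesBelow (g : LaurentSeries R) (q : ℤ) : Prop := ∀ i < q, g.coeff i = 0

theorem vanishesBelow_single (m : ℤ) (c : R) : VanishesBelow (single m c) m := fun i hi => by
  rw [coeff_single, if_neg hi.ne]

namespace VanishesBelow

variable {f g : LaurentSeries R} {a b q : ℤ}

theorem mono (h : VanishesBelow g q) (hq : a ≤ q) : VanishesBelow g a :=
  fun i hi => h i (hi.trans_le hq)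

theorem zero : VanishesBelow (0 : LaurentSeries R) q := fun _ _ => rfl

theorem neg (h : VanishesBelow g q) : VanishesBelow (-g) q := fun i hi => by
  rw [coeff_neg, h i hi, neg_zero]

theorem add (hf : VanishesBelow f q) (hg : VanishesBelow g q) : VanishesBelow (f + g) q :=
  fun i hi => by rw [coeff_add, hf i hi, hg i hi, add_zero]

theorem mul (hf : VanishesBelow f a) (hg : VanishesBelow g b) :
    VanishesBelow (f * g) (a + b) := by
  intro q hq
  rw [coeff_mul]
  refine Finset.sum_eq_zero fun ⟨i, j⟩ hij => ?_
  obtain ⟨hi, hj, rfl⟩ := Finset.mem_antidiagonal.1 hij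
  by_cases hia : i < a
  · exact absurd (hf i hia) ((mem_support _ _).1 hi)
  · rw [hg j (by omega), mul_zero]

theorem pow (h : VanishesBelow g q) (n : ℕ) : VanishesBelow (g ^ n) (n * q) := by
  induction n with
  | zero => simpa using vanishesBelow_single (R := R) 0 1
  | succ n ih => exact (ih.mul h).mono (le_of_eq (by push_cast; ring))

theorem sum {ι : Type*} {s : Finset ι} {g : ι → LaurentSeries R}
    (h : ∀ i ∈ s, VanishesBelow (g i) q) : VanishesBelow (∑ i ∈ s, g i) q := fun j hj => by
  rw [coeff_sum]
  exact Finset.sum_eq_zero fun i hi => h i hi j hj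

end VanishesBelow

theorem vanishesBelow_order (g : LaurentSeries R) : VanishesBelow g g.order :=
  fun _ hi => coeff_eq_zero_of_lt_order hi

end Ring

section Field

variable {k : Type*} [Field k]

noncomputable def truncIcc (g : LaurentSeries k) (L N : ℤ) : LaurentSeries k :=
  ∑ i ∈ Icc L N, single i (g.coeff i)

theorem coeff_truncIcc (g : LaurentSeries k) (L N j : ℤ) :
    (truncIcc g L N).coeff j = if j ∈ Icc L N then g.coeff j else 0 := by
  simp only [truncIcc, coeff_sum, coeff_single]
  convert Finset.sum_ite_eq (Icc L N) j g.coeff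

theorem VanishesBelow.truncIcc_sub {g : LaurentSeries k} {L : ℤ} (hg : VanishesBelow g L)
    (N : ℤ) : VanishesBelow (truncIcc g L N - g) (N + 1) := by
  intro i hi
  rw [coeff_sub, coeff_truncIcc, sub_eq_zero]
  split_ifs with hiL
  · rfl
  · exact (hg i (by simp at hiL; omega)).symm

theorem exists_forall_vanishesBelow_sub_mem {f : LaurentSeries k} {U : Set (LaurentSeries k)}
    (hU : U ∈ 𝓝 f) : ∃ D : ℤ, ∀ g, VanishesBelow (g - f) D → g ∈ U := by
  obtain ⟨γ, hγ⟩ := Valued.mem_nhds.1 hU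
  set D := -(WithZero.log (MonoidWithZeroHom.ValueGroup₀.embedding γ.1) - 1)
  have hD : WithZero.exp (-D) < MonoidWithZeroHom.ValueGroup₀.embedding γ.1 := by
    rw [← WithZero.lt_log_iff_exp_lt (by simp)]
    simp [D]
  refine ⟨D, fun g hg => hγ ?_⟩
  rw [Set.mem_ofPred, Valued.v.restrict_lt_iff_lt_embedding]
  exact ((valuation_le_iff_coeff_lt_eq_zero k).2 hg).trans_lt hD

theorem VanishesBelow.tendsto_truncIcc {g : LaurentSeries k} {L : ℤ} (hg : VanishesBelow g L) :
    Tendsto (truncIcc g L) atTop (𝓝 g) := fun U hU => by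
  obtain ⟨D, hD⟩ := exists_forall_vanishesBelow_sub_mem hU
  exact mem_map.2 <| (eventually_ge_atTop D).mono fun N hN =>
    hD _ ((hg.truncIcc_sub N).mono (by omega))

theorem VanishesBelow.eventually_coeff_apply_truncIcc {g : LaurentSeries k} {L : ℤ}
    (hg : VanishesBelow g L) {Φ : LaurentSeries k → LaurentSeries k} (hΦ : Continuous Φ)
    (q : ℤ) : ∀ᶠ N in atTop, (Φ (truncIcc g L N)).coeff q = (Φ g).coeff q := by
  let _ : UniformSpace k := ⊥
  have hc : Continuous fun h => (Φ h).coeff q := (uniformContinuous_coeff q).continuous.comp hΦ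
  have := (hc.tendsto g).comp hg.tendsto_truncIcc
  rw [nhds_discrete, tendsto_pure] at this
  exact this

theorem coeff_apply_truncIcc (Φ : LaurentSeries k →ₗ[k] LaurentSeries k) (g : LaurentSeries k)
    (L N q : ℤ) : (Φ (truncIcc g L N)).coeff q
      = ∑ i ∈ Icc L N, g.coeff i * (Φ (single i 1)).coeff q := by
  simp only [truncIcc, map_sum, coeff_sum]
  refine Finset.sum_congr rfl fun i _ => ?_
  have : single i (g.coeff i) = g.coeff i • single i (1 : k) := by
    ext j
    simp [coeff_single]
  rw [this, map_smul, coeff_smul, smul_eq_mul]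

end Field

end LaurentSeries

structure IsHasseSchmidt_s8 {R A : Type*} [CommSemiring R] [Semiring A] [Module R A]
    (D : ℕ → A →ₗ[R] A) : Prop where
  zero : D 0 = LinearMap.id
  leibniz : ∀ n f g, D n (f * g) = ∑ ℓ ∈ range (n + 1), D ℓ f * D (n - ℓ) g

namespace IsHasseSchmidt_s8

variable {R A : Type*} [CommSemiring R]

section Semiring

variable [Semiring A] [Module R A] {D : ℕ → A →ₗ[R] A}

theorem zero_apply (hD : IsHasseSchmidt_s8 D) (f : A) : D 0 f = f := by
  rw [hD.zero, LinearMap.id_apply]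

theorem leibniz_succ (hD : IsHasseSchmidt_s8 D) (n : ℕ) (f g : A) :
    D (n + 1) (f * g) =
      f * D (n + 1) g + ∑ ℓ ∈ range n, D (ℓ + 1) f * D (n - ℓ) g + D (n + 1) f * g := by
  rw [hD.leibniz, sum_range_succ, sum_range_succ', Nat.sub_self, Nat.sub_zero, hD.zero_apply,
    hD.zero_apply]
  simp only [Nat.add_sub_add_right]
  abel

end Semiring

section Ring

variable [Ring A] [Module R A] {D : ℕ → A →ₗ[R] A}

theorem apply_one (hD : IsHasseSchmidt_s8 D) {n : ℕ} (hn : n ≠ 0) : D n 1 = 0 := by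
  induction n using Nat.strong_induction_on with
  | _ n ih =>
    obtain ⟨n, rfl⟩ := Nat.exists_eq_succ_of_ne_zero hn
    have h := hD.leibniz_succ n 1 1
    have hmid : ∀ ℓ ∈ range n, D (ℓ + 1) (1 : A) * D (n - ℓ) 1 = 0 := fun ℓ hℓ => by
      rw [ih (ℓ + 1) (by simp at hℓ; omega) (by omega), zero_mul]
    rw [sum_eq_zero hmid, mul_one, one_mul, add_zero] at h
    simpa using h

end Ring

section CommRing

variable [CommRing A] [Module R A] {D : ℕ → A →ₗ[R] A}

theorem apply_succ_of_mul_eq_one (hD : IsHasseSchmidt_s8 D) {x y : A} (hxy : x * y = 1)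
    (hx1 : D 1 x = 1) (hx2 : ∀ n, 2 ≤ n → D n x = 0) (j : ℕ) :
    D (j + 1) y = -(y * D j y) := by
  have h := hD.leibniz (j + 1) x y
  rw [hxy, hD.apply_one j.succ_ne_zero, sum_range_succ', sum_range_succ',
    sum_eq_zero fun ℓ _ => by rw [hx2 (ℓ + 1 + 1) (by omega), zero_mul], hx1, hD.zero_apply,
    zero_add, one_mul, Nat.add_sub_cancel, Nat.sub_zero] at h
  calc D (j + 1) y = y * (x * D (j + 1) y) := by rw [← mul_assoc, mul_comm y, hxy, one_mul]
    _ = -(y * D j y) := by rw [eq_neg_of_add_eq_zero_right h.symm, mul_neg]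

theorem apply_eq_of_mul_eq_one (hD : IsHasseSchmidt_s8 D) {x y : A} (hxy : x * y = 1)
    (hx1 : D 1 x = 1) (hx2 : ∀ n, 2 ≤ n → D n x = 0) (j : ℕ) :
    D j y = (-y) ^ j * y := by
  induction j with
  | zero => rw [hD.zero_apply, pow_zero, one_mul]
  | succ j ih => rw [hD.apply_succ_of_mul_eq_one hxy hx1 hx2, ih, pow_succ]; ring

end CommRing

end IsHasseSchmidt_s8

namespace IsHasseSchmidt_s8

open LaurentSeries

variable {R : Type*} [CommRing R] {D : ℕ → LaurentSeries R →ₗ[R] LaurentSeries R}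
  {β : ℕ → ℤ} {n : ℕ}

theorem vanishesBelow_apply_mul (hD : IsHasseSchmidt_s8 D) (hβ : ∀ a b, β (a + b) ≤ β a + β b)
    {f g : LaurentSeries R} {a b : ℤ} (hf : ∀ i ≤ n, VanishesBelow (D i f) (β i + a))
    (hg : ∀ i ≤ n, VanishesBelow (D i g) (β i + b)) :
    ∀ i ≤ n, VanishesBelow (D i (f * g)) (β i + (a + b)) := by
  intro i hi
  rw [hD.leibniz]
  refine VanishesBelow.sum fun ℓ hℓ => ?_
  have hℓi : ℓ ≤ i := Nat.lt_succ_iff.1 (mem_range.1 hℓ)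
  refine ((hf ℓ (hℓi.trans hi)).mul (hg (i - ℓ) (by omega))).mono ?_
  have := hβ ℓ (i - ℓ)
  rw [Nat.add_sub_cancel' hℓi] at this
  omega

theorem vanishesBelow_apply_of_mul_eq_one (hD : IsHasseSchmidt_s8 D) (hβ0 : β 0 = 0)
    (hβ : ∀ a b, β (a + b) ≤ β a + β b) {f g : LaurentSeries R} (hfg : f * g = 1) {a : ℤ}
    (hf : ∀ i ≤ n, VanishesBelow (D i f) (β i + a)) (hg : VanishesBelow g (-a)) :
    ∀ i ≤ n, VanishesBelow (D i g) (β i - a) := by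
  intro i
  induction i using Nat.strong_induction_on with
  | _ i ih =>
    intro hi
    rcases i with _ | i
    · rw [hD.zero_apply, hβ0, zero_sub]
      exact hg
    have h := hD.leibniz_succ i f g
    rw [hfg, hD.apply_one i.succ_ne_zero] at h
    have hfD : f * D (i + 1) g
        = -(∑ ℓ ∈ range i, D (ℓ + 1) f * D (i - ℓ) g + D (i + 1) f * g) := by
      linear_combination -h
    have hfD_vb : VanishesBelow (f * D (i + 1) g) (β (i + 1)) := by
      rw [hfD]
      refine .neg <| .add (VanishesBelow.sum fun ℓ hℓ => ?_)
        ((hf _ hi).mul hg |>.mono (by omega))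
      have hℓi : ℓ < i := mem_range.1 hℓ
      have := hβ (ℓ + 1) (i - ℓ)
      rw [show ℓ + 1 + (i - ℓ) = i + 1 by omega] at this
      exact ((hf _ (by omega)).mul (ih (i - ℓ) (by omega) (by omega))).mono (by omega)
    have hgf : D (i + 1) g = g * (f * D (i + 1) g) := by
      rw [← mul_assoc, mul_comm g, hfg, one_mul]
    rw [hgf]
    exact (hg.mul hfD_vb).mono (by omega)

theorem vanishesBelow_apply_single (hD : IsHasseSchmidt_s8 D) (hβ0 : β 0 = 0)
    (hβ : ∀ a b, β (a + b) ≤ β a + β b)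
    (ht : ∀ i, 1 ≤ i → i ≤ n → VanishesBelow (D i (single 1 1)) (β i + 1)) :
    ∀ i ≤ n, ∀ m : ℤ, VanishesBelow (D i (single m 1)) (β i + m) := by
  have hone : ∀ i ≤ n, VanishesBelow (D i (single 0 1)) (β i + 0) := by
    rintro (_ | i) _
    · rw [hD.zero_apply, hβ0]
      exact vanishesBelow_single 0 1
    · rw [single_zero_one, hD.apply_one i.succ_ne_zero]
      exact .zero
  have ht' : ∀ i ≤ n, VanishesBelow (D i (single 1 1)) (β i + 1) := by
    rintro (_ | i) hi
    · rw [hD.zero_apply, hβ0]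
      exact vanishesBelow_single 1 1
    · exact ht _ (by omega) hi
  have hnat : ∀ M : ℕ, ∀ i ≤ n, VanishesBelow (D i (single (M : ℤ) 1)) (β i + M) := by
    intro M
    induction M with
    | zero => exact hone
    | succ M ih =>
      have hsingle : single ((M + 1 : ℕ) : ℤ) (1 : R) = single (M : ℤ) 1 * single 1 1 := by
        rw [single_mul_single, one_mul, Nat.cast_succ]
      rw [hsingle, Nat.cast_succ]
      exact hD.vanishesBelow_apply_mul hβ ih ht'
  intro i hi m
  obtain ⟨M, rfl | rfl⟩ := Int.eq_nat_or_neg m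
  · exact hnat M i hi
  · have hinv : single (M : ℤ) (1 : R) * single (-(M : ℤ)) 1 = 1 := by
      rw [single_mul_single, add_neg_cancel, one_mul, single_zero_one]
    rw [← sub_eq_add_neg]
    exact hD.vanishesBelow_apply_of_mul_eq_one hβ0 hβ hinv (hnat M) (vanishesBelow_single _ _)
      i hi

theorem vanishesBelow_apply_single_sub (hD : IsHasseSchmidt_s8 D) (hβ0 : β 0 = 0)
    (hβ : ∀ a b, β (a + b) ≤ β a + β b) {s : ℤ}
    (hs : ∀ a b, 1 ≤ a → 1 ≤ b → β (a + b) + s ≤ β a + β b) (hn : n ≠ 0)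
    (ht : ∀ i, 1 ≤ i → i < n → VanishesBelow (D i (single 1 1)) (β i + 1))
    {m : ℤ} (hm : 1 ≤ m) :
    VanishesBelow (D n (single m 1) - single (m - 1) (m : R) * D n (single 1 1))
      (m + β n + s) := by
  obtain ⟨n, rfl⟩ : ∃ n', n = n' + 1 := ⟨n - 1, by omega⟩
  have hmono := hD.vanishesBelow_apply_single hβ0 hβ (n := n) fun i h1 h2 => ht i h1 (by omega)
  induction m, hm using Int.leInduction with
  | base => simp [VanishesBelow.zero]
  | succ m hm ih =>
    set Dt := D (n + 1) (single 1 1)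
    have h := hD.leibniz_succ n (single m 1) (single 1 1)
    have e1 : single (m - 1) (m : R) * single 1 1 = single m (m : R) := by
      rw [single_mul_single, mul_one, sub_add_cancel]
    have e2 : single m ((m + 1 : ℤ) : R) = single m (m : R) + single m 1 := by
      rw [Int.cast_add, Int.cast_one, single_add]
    rw [single_mul_single, one_mul] at h
    have key : D (n + 1) (single (m + 1) 1) - single (m + 1 - 1) ((m + 1 : ℤ) : R) * Dt
        = ∑ ℓ ∈ range n, D (ℓ + 1) (single m 1) * D (n - ℓ) (single 1 1)
          + (D (n + 1) (single m 1) - single (m - 1) (m : R) * Dt) * single 1 1 := by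
      rw [add_sub_cancel_right]
      linear_combination h + Dt * e1 - Dt * e2
    rw [key]
    refine .add (VanishesBelow.sum fun ℓ hℓ => ?_) ((ih.mul (vanishesBelow_single 1 1)).mono ?_)
    · have hℓn : ℓ < n := mem_range.1 hℓ
      have := hs (ℓ + 1) (n - ℓ) (by omega) (by omega)
      rw [show ℓ + 1 + (n - ℓ) = n + 1 by omega] at this
      exact ((hmono (ℓ + 1) hℓn m).mul (ht _ (by omega) (by omega))).mono (by omega)
    · omega

end IsHasseSchmidt_s8

namespace LaurentSeries

variable {k : Type*} [Field k]

theorem VanishesBelow.apply_of_forall_single {Φ : LaurentSeries k →ₗ[k] LaurentSeries k}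
    (hΦ : Continuous Φ) {c : ℤ} (h : ∀ i, VanishesBelow (Φ (single i 1)) (i + c))
    {f : LaurentSeries k} {L : ℤ} (hf : VanishesBelow f L) : VanishesBelow (Φ f) (L + c) := by
  intro q hq
  obtain ⟨N, hN⟩ := (hf.eventually_coeff_apply_truncIcc hΦ q).exists
  rw [← hN, coeff_apply_truncIcc]
  refine sum_eq_zero fun i hi => ?_
  rw [h i q (by simp at hi; omega), mul_zero]

-- To leading order `Φ g` is `g' * Φ t`, and `g'` starts with `r * g.coeff r * t ^ (r - 1)`.
theorem coeff_apply_eq_of_sub_vanishesBelow {Φ : LaurentSeries k →ₗ[k] LaurentSeries k}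
    (hΦ : Continuous Φ) {g : LaurentSeries k} {d r c j : ℤ} (hg : VanishesBelow g d)
    (hchar : ∀ i < r, (i : k) * g.coeff i = 0)
    (hΦg : ∀ i, d ≤ i →
      VanishesBelow (Φ (single i 1) - single (i - 1) (i : k) * Φ (single 1 1)) (i + c))
    (hj : VanishesBelow (Φ (single 1 1)) j) (hjc : r + j ≤ d + c) :
    (Φ g).coeff (r - 1 + j) = r * g.coeff r * (Φ (single 1 1)).coeff j := by
  obtain ⟨N, hN, hNr⟩ :=
    ((hg.eventually_coeff_apply_truncIcc hΦ _).and (eventually_ge_atTop r)).exists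
  have hterm : ∀ i ∈ Icc d N, (Φ (single i 1)).coeff (r - 1 + j)
      = i * (Φ (single 1 1)).coeff (r + j - i) := by
    intro i hi
    have hdi := (mem_Icc.1 hi).1
    have hΦi := hΦg i hdi (r - 1 + j) (by omega)
    rw [coeff_sub, sub_eq_zero] at hΦi
    rw [hΦi, show r - 1 + j = r + j - i + (i - 1) by ring, coeff_single_mul_add]
  rw [← hN, coeff_apply_truncIcc, sum_congr rfl fun i hi => by rw [hterm i hi]]
  rw [sum_eq_single r]
  · rw [add_sub_cancel_left, mul_left_comm, mul_assoc]
  · intro i _ hir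
    rcases hir.lt_or_gt with hlt | hgt
    · rw [mul_left_comm, ← mul_assoc, hchar i hlt, zero_mul]
    · rw [hj _ (by omega), mul_zero, mul_zero]
  · intro hr
    rw [hg r (by simp at hr; omega), zero_mul]

end LaurentSeries

def hsBound (d r : ℤ) (n : ℕ) : ℤ := if n = 0 then 0 else (3 * n - 1) * d - (2 * n - 1) * r

section hsBound

variable {d r : ℤ}

theorem hsBound_zero : hsBound d r 0 = 0 := if_pos rfl

theorem hsBound_of_ne_zero {n : ℕ} (hn : n ≠ 0) :
    hsBound d r n = (3 * n - 1) * d - (2 * n - 1) * r := if_neg hn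

theorem hsBound_add {a b : ℕ} (ha : a ≠ 0) (hb : b ≠ 0) :
    hsBound d r (a + b) + (r - d) = hsBound d r a + hsBound d r b := by
  rw [hsBound_of_ne_zero ha, hsBound_of_ne_zero hb, hsBound_of_ne_zero (by omega)]
  push_cast
  ring

theorem hsBound_add_le (hdr : d ≤ r) (a b : ℕ) :
    hsBound d r (a + b) ≤ hsBound d r a + hsBound d r b := by
  rcases eq_or_ne a 0 with rfl | ha
  · simp [hsBound_zero]
  rcases eq_or_ne b 0 with rfl | hb
  · simp [hsBound_zero]
  linarith [hsBound_add (d := d) (r := r) ha hb]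

theorem hsBound_add_le_mul (hdr : d ≤ r) {n : ℕ} (hn : n ≠ 0) :
    hsBound d r n + r ≤ (n + 1) * d := by
  rw [hsBound_of_ne_zero hn]
  have : (2 * (n : ℤ) - 2) * d ≤ (2 * n - 2) * r :=
    mul_le_mul_of_nonneg_left hdr (by omega)
  linarith

end hsBound

namespace IsHasseSchmidt_s8

open LaurentSeries

variable {k : Type*} [Field k] {D : ℕ → LaurentSeries k →ₗ[k] LaurentSeries k}

theorem vanishesBelow_apply_single_one (hD : IsHasseSchmidt_s8 D) (hcont : ∀ n, Continuous (D n))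
    {y : LaurentSeries k} {d r : ℤ} (hd : 1 ≤ d) (hdr : d ≤ r) (hy : VanishesBelow y d)
    (hDy : ∀ n : ℕ, VanishesBelow (D n y) ((n + 1) * d)) (hyr : y.coeff r ≠ 0)
    (hrk : (r : k) ≠ 0) (hchar : ∀ i < r, (i : k) * y.coeff i = 0) {n : ℕ} (hn : n ≠ 0) :
    VanishesBelow (D n (single 1 1)) (hsBound d r n + 1) := by
  induction n using Nat.strong_induction_on with
  | _ n ih =>
    have hA : ∀ i, d ≤ i → VanishesBelow
        (D n (single i 1) - single (i - 1) (i : k) * D n (single 1 1))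
        (i + (hsBound d r n + (r - d))) := fun i hi =>
      (hD.vanishesBelow_apply_single_sub hsBound_zero (hsBound_add_le hdr)
        (fun a b ha hb => (hsBound_add (by omega) (by omega)).le) hn
        (fun i h1 h2 => ih i h2 (by omega)) (by omega : 1 ≤ i)).mono (by omega)
    set t := D n (single 1 1)
    by_cases hle : hsBound d r n + 1 ≤ t.order
    · exact (vanishesBelow_order t).mono hle
    have hcoeff := coeff_apply_eq_of_sub_vanishesBelow (hcont n) hy hchar hA
      (vanishesBelow_order t) (by omega)
    have hbound := hsBound_add_le_mul hdr hn
    rw [hDy n _ (by linarith)] at hcoeff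
    have ht : t.coeff t.order = 0 :=
      (mul_eq_zero.1 hcoeff.symm).resolve_left (mul_ne_zero hrk hyr)
    rw [coeff_order_eq_zero.1 ht]
    exact .zero

end IsHasseSchmidt_s8

end

theorem intCast_mul_eq_zero_of_lt {k : Type*} [Field k] {b : ℤ → k} {r : ℤ}
    (hrmin : ∀ m : ℤ, b m ≠ 0 → ¬ ((ringChar k : ℤ) ∣ m) → r ≤ m)
    {i : ℤ} (hi : i < r) : (i : k) * b i = 0 := by
  by_cases hi0 : b i = 0
  · rw [hi0, mul_zero]
  have hpi : (ringChar k : ℤ) ∣ i := not_not.1 fun h => (hrmin i hi0 h).not_gt hi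
  rw [(CharP.intCast_eq_zero_iff k _ i).2 hpi, zero_mul]

theorem hasse_schmidt_val_lower_bound_infinite_general (k : Type*) [Field k]
    (d : ℤ) (hd : 1 ≤ d) (x : LaurentSeries k) (hx0 : x ≠ 0)
    (hxlow : ∀ m : ℤ, m < d → (x⁻¹).coeff m = 0)
    (r : ℤ)
    (hr : (x⁻¹).coeff r ≠ 0 ∧ ¬ ((ringChar k : ℤ) ∣ r))
    (hrmin : ∀ m : ℤ, (x⁻¹).coeff m ≠ 0 → ¬ ((ringChar k : ℤ) ∣ m) → r ≤ m)
    (D : ℕ → LaurentSeries k →ₗ[k] LaurentSeries k)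
    (hD0 : D 0 = LinearMap.id)
    (hLeib : ∀ (n : ℕ) (f g : LaurentSeries k),
      D n (f * g) = ∑ ℓ ∈ Finset.range (n + 1), D ℓ f * D (n - ℓ) g)
    (hcont : ∀ n : ℕ, Continuous (D n))
    (hx1 : D 1 x = 1) (hx2 : ∀ n : ℕ, 2 ≤ n → D n x = 0)
    (f : LaurentSeries k) (n : ℕ) (hn : 1 ≤ n) :
    ((((3 * (n : ℤ) - 1) * d - (2 * (n : ℤ) - 1) * r + f.order : ℤ)) : WithTop ℤ)
      ≤ addVal (D n f) := by
  have hD : IsHasseSchmidt_s8 D := ⟨hD0, hLeib⟩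
  have hy : x⁻¹.VanishesBelow d := hxlow
  have hdr : d ≤ r := not_lt.1 fun h => hr.1 (hxlow r h)
  have hrk : (r : k) ≠ 0 := mt (CharP.intCast_eq_zero_iff k _ r).1 hr.2
  have hDy (j : ℕ) : (D j x⁻¹).VanishesBelow ((j + 1) * d) := by
    rw [hD.apply_eq_of_mul_eq_one (mul_inv_cancel₀ hx0) hx1 hx2]
    exact (hy.neg.pow j |>.mul hy).mono (le_of_eq (by ring))
  have ht (i : ℕ) (hi : i ≠ 0) :=
    hD.vanishesBelow_apply_single_one hcont hd hdr hy hDy hr.1 hrk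
      (fun _ => intCast_mul_eq_zero_of_lt hrmin) hi
  have hmono := hD.vanishesBelow_apply_single hsBound_zero (hsBound_add_le hdr) (n := n)
    fun i hi _ => ht i (by omega)
  have hDf := (LaurentSeries.vanishesBelow_order f).apply_of_forall_single (hcont n)
    fun i => (hmono n le_rfl i).mono (le_of_eq (add_comm _ _))
  rw [hsBound_of_ne_zero (by omega), add_comm] at hDf
  rw [addVal_eq_orderTop]
  exact HahnSeries.le_orderTop_iff_forall.2 fun j hj => hDf j (by exact_mod_cast hj)

/-- Let `k` be a field of characteristic `p ≥ 0` and `K = k((t))` with t-adic valuation `v`.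
Let `x ∈ K` be nonzero with `1/x = t^d + Σ_{m>d} b_m t^m` (`d ≥ 1`), let `r` be the least
integer `m` with `b_m ≠ 0` and `p ∤ m`, and let `D` be a Hasse–Schmidt derivation on `K`
over `k`, continuous for the t-adic topology, with `D 1 x = 1` and `D n x = 0` for `n ≥ 2`.
Then for every nonzero `f ∈ K` and every `n ≥ 1`,
`v (D n f) ≥ (3n-1)d - (2n-1)r + v f`. -/
theorem hasse_schmidt_val_lower_bound_infinite (k : Type*) [Field k]
    (d : ℤ) (hd : 1 ≤ d) (x : LaurentSeries k) (hx0 : x ≠ 0)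
    (hxd : (x⁻¹).coeff d = 1)
    (hxlow : ∀ m : ℤ, m < d → (x⁻¹).coeff m = 0)
    (r : ℤ)
    (hr : (x⁻¹).coeff r ≠ 0 ∧ ¬ ((ringChar k : ℤ) ∣ r))
    (hrmin : ∀ m : ℤ, (x⁻¹).coeff m ≠ 0 → ¬ ((ringChar k : ℤ) ∣ m) → r ≤ m)
    (D : ℕ → LaurentSeries k →ₗ[k] LaurentSeries k)
    (hD0 : D 0 = LinearMap.id)
    (hLeib : ∀ (n : ℕ) (f g : LaurentSeries k),
      D n (f * g) = ∑ ℓ ∈ Finset.range (n + 1), D ℓ f * D (n - ℓ) g)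
    (hcont : ∀ n : ℕ, Continuous (D n))
    (hx1 : D 1 x = 1) (hx2 : ∀ n : ℕ, 2 ≤ n → D n x = 0)
    (f : LaurentSeries k) (hf : f ≠ 0) (n : ℕ) (hn : 1 ≤ n) :
    ((((3 * (n : ℤ) - 1) * d - (2 * (n : ℤ) - 1) * r + f.order : ℤ)) : WithTop ℤ)
      ≤ addVal (D n f) :=
  hasse_schmidt_val_lower_bound_infinite_general k d hd x hx0 hxlow r hr hrmin D hD0 hLeib hcont hx1
    hx2 f n hn
end

section
/- Let K be a field of characteristic 0, let x_1, x_2, …, x_n ∈ K, and let ℓ ≥ 0 be an integer. Let M be the n × n matrix with entries M_{i,j} = binom(x_i, ℓ + j − 1) for 1 ≤ i, j ≤ n, where binom(x,k) := x(x−1)⋯(x−k+1)/k!. Then det(M) = (∏_{i=1}^{n} binom(x_i, ℓ)) · (∏_{1≤i<j≤n} (x_j − x_i)) / (∏_{j=1}^{n−1} (ℓ + j)^{n−j}). -/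
/-- The generalized binomial coefficient `binom(x,k) = x(x-1)⋯(x-k+1)/k!` for `x` an
element of a field. -/
def genBinom {K : Type*} [Field K] (x : K) (j : ℕ) : K :=
  (∏ i ∈ Finset.range j, (x - (i : K))) / (j.factorial : K)

open Finset Polynomial

lemma factorial_cast_add (K : Type*) [Field K] (ℓ j : ℕ) :
    ((ℓ + j).factorial : K) = (ℓ.factorial : K) * ∏ t ∈ range j, ((ℓ : K) + t + 1) := by
  induction j with
  | zero => simp
  | succ j ih =>
    rw [← Nat.add_assoc, Nat.factorial_succ, prod_range_succ, ← mul_assoc, Nat.cast_mul, ih]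
    push_cast
    ring

lemma genBinom_add {K : Type*} [Field K] (x : K) (ℓ j : ℕ) :
    genBinom x (ℓ + j) = genBinom x ℓ *
      ((∏ t ∈ range j, (x - ((ℓ : K) + t))) / ∏ t ∈ range j, ((ℓ : K) + t + 1)) := by
  unfold genBinom
  rw [prod_range_add, factorial_cast_add, div_mul_div_comm]
  push_cast
  ring_nf

-- triangular product lemma
lemma prod_prod_range (K : Type*) [CommMonoid K] (f : ℕ → K) (n : ℕ) :
    ∏ j ∈ range n, ∏ t ∈ range j, f t = ∏ t ∈ range n, f t ^ (n - 1 - t) := by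
  induction n with
  | zero => simp
  | succ n ih =>
    rw [prod_range_succ, ih]
    rw [prod_range_succ (fun t => f t ^ (n + 1 - 1 - t)), ← prod_mul_distrib]
    have h1 : n + 1 - 1 - n = 0 := by omega
    rw [h1, pow_zero, mul_one]
    exact prod_congr rfl fun t ht => by
      rw [← pow_succ]
      congr 1
      have := mem_range.mp ht
      omega

lemma prod_filter_lt_pairs {K : Type*} [CommMonoid K] {n : ℕ} (f : Fin n → Fin n → K) :
    ∏ p ∈ Finset.univ.filter (fun p : Fin n × Fin n => p.1 < p.2), f p.1 p.2 =
      ∏ i : Fin n, ∏ j ∈ Ioi i, f i j := by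
  rw [prod_sigma' univ (fun i => Ioi i) (fun i j => f i j)]
  apply prod_nbij' (fun p => (⟨p.1, p.2⟩ : Σ _ : Fin n, Fin n))
    (fun p => ((p.1, p.2) : Fin n × Fin n)) <;>
    simp +contextual [Finset.mem_sigma, Finset.mem_Ioi]

lemma prod_pow_trunc {K : Type*} [CommMonoid K] (f : ℕ → K) (n : ℕ) :
    ∏ t ∈ range n, f t ^ (n - 1 - t) = ∏ t ∈ range (n - 1), f t ^ (n - 1 - t) := by
  cases n with
  | zero => simp
  | succ n =>
    rw [Nat.add_sub_cancel, prod_range_succ]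
    simp

/-- For `x_1, …, x_n` in a field `K` of characteristic `0` and an integer `ℓ ≥ 0`, the
determinant of the `n × n` matrix with entries `binom(x_i, ℓ+j-1)` (`1 ≤ i, j ≤ n`) equals
`(∏_i binom(x_i, ℓ)) · (∏_{i<j} (x_j - x_i)) / (∏_{j=1}^{n-1} (ℓ+j)^(n-j))`. -/
theorem det_binomial_matrix (K : Type*) [Field K] [CharZero K]
    (n : ℕ) (x : Fin n → K) (ℓ : ℕ) :
    (Matrix.of fun i j : Fin n => genBinom (x i) (ℓ + (j : ℕ))).det =
      (∏ i : Fin n, genBinom (x i) ℓ) *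
        (∏ p ∈ Finset.univ.filter (fun p : Fin n × Fin n => p.1 < p.2),
          (x p.2 - x p.1)) /
        (∏ j ∈ Finset.range (n - 1), ((ℓ : K) + (j : K) + 1) ^ (n - 1 - j)) := by
  classical
  set p : Fin n → K[X] := fun j => ∏ t ∈ range (j : ℕ), (X - C ((ℓ : K) + t)) with hp
  have key : (Matrix.of fun i j : Fin n => genBinom (x i) (ℓ + (j : ℕ))) =
      Matrix.of fun i j : Fin n =>
        genBinom (x i) ℓ *
          ((∏ t ∈ range (j : ℕ), ((ℓ : K) + t + 1))⁻¹ * (p j).eval (x i)) := by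
    ext i j
    rw [Matrix.of_apply, Matrix.of_apply, genBinom_add, hp]
    simp [eval_prod, div_eq_inv_mul, mul_comm]
  rw [key]
  have h1 : (Matrix.of fun i j : Fin n =>
        genBinom (x i) ℓ *
          ((∏ t ∈ range (j : ℕ), ((ℓ : K) + t + 1))⁻¹ * (p j).eval (x i))).det =
      (∏ i : Fin n, genBinom (x i) ℓ) *
        (Matrix.of fun i j : Fin n =>
          (∏ t ∈ range (j : ℕ), ((ℓ : K) + t + 1))⁻¹ * (p j).eval (x i)).det :=
    Matrix.det_mul_column (fun i => genBinom (x i) ℓ) _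
  have h2 : (Matrix.of fun i j : Fin n =>
        (∏ t ∈ range (j : ℕ), ((ℓ : K) + t + 1))⁻¹ * (p j).eval (x i)).det =
      (∏ j : Fin n, (∏ t ∈ range (j : ℕ), ((ℓ : K) + t + 1))⁻¹) *
        (Matrix.of fun i j : Fin n => (p j).eval (x i)).det :=
    Matrix.det_mul_row (fun j : Fin n => (∏ t ∈ range (j : ℕ), ((ℓ : K) + t + 1))⁻¹) _
  rw [h1, h2]
  have hmonic : ∀ j : Fin n, (p j).Monic := fun j =>
    monic_prod_of_monic _ _ fun t _ => monic_X_sub_C _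
  have hdeg : ∀ j : Fin n, (p j).natDegree = (j : ℕ) := by
    intro j
    rw [hp, Polynomial.natDegree_prod _ _ (fun t _ => X_sub_C_ne_zero _)]
    simp only [Polynomial.natDegree_X_sub_C]
    simp
  rw [← Matrix.det_eval_matrixOfPolynomials_eq_det_vandermonde x p hdeg hmonic,
    Matrix.det_vandermonde]
  rw [prod_filter_lt_pairs (fun i j => x j - x i)]
  rw [prod_inv_distrib]
  rw [Fin.prod_univ_eq_prod_range (fun j => ∏ t ∈ range j, ((ℓ : K) + t + 1)) n]
  rw [prod_prod_range K (fun t => (ℓ : K) + t + 1) n, prod_pow_trunc]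
  rw [div_eq_mul_inv]
  ring
end

section
/- Let d ≥ 2 be an integer, let δ_1 < δ_2 < ⋯ < δ_n be positive integers none of which is divisible by d, and let ℓ ≥ 0 be an integer. Then the determinant of the n × n rational matrix with (i,j) entry binom(δ_i/d, ℓ + j − 1), where binom(x,k) := x(x−1)⋯(x−k+1)/k!, is nonzero in ℚ. -/
/-!
Write `binom(x, k) = P_k(x) / k!` with the falling factorial `P_k`. Since
`P_{ℓ+j}(x) = P_ℓ(x) · P_j(x - ℓ)`, pulling the factor `P_ℓ(x_i)` out of row `i` and `1/(ℓ+j)!`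
out of column `j` leaves the matrix `(P_j(x_i - ℓ))`, whose determinant is the Vandermonde
determinant of the `x_i - ℓ` because the `P_j` are monic of degree `j`. With `x_i = δ_i / d`
the row factors vanish only if some `x_i` is a natural number, which `d ∤ δ_i` rules out, and the
Vandermonde determinant vanishes only if two `x_i` coincide, which strict monotonicity rules out.
-/

/-- The generalized binomial coefficient `binom(x,k) = x(x-1)⋯(x-k+1)/k!` for `x ∈ ℚ`. -/
def qBinom (x : ℚ) (j : ℕ) : ℚ :=
  (∏ i ∈ Finset.range j, (x - (i : ℚ))) / (j.factorial : ℚ)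

open Polynomial Matrix

theorem qBinom_eq_inv_factorial_mul_descPochhammer_eval (x : ℚ) (j : ℕ) :
    qBinom x j = (j.factorial : ℚ)⁻¹ * (descPochhammer ℚ j).eval x := by
  rw [qBinom, descPochhammer_eval_eq_prod_range, div_eq_inv_mul]

theorem descPochhammer_eval_ne_zero {R : Type*} [CommRing R] [NoZeroDivisors R] [Nontrivial R]
    {r : R} (hr : ∀ k : ℕ, r ≠ k) (n : ℕ) : (descPochhammer R n).eval r ≠ 0 := by
  rw [descPochhammer_eval_eq_prod_range, Finset.prod_ne_zero_iff]
  exact fun k _ => sub_ne_zero.2 (hr k)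

theorem descPochhammer_add_eval_eq_mul (R : Type*) [CommRing R] (ℓ j : ℕ) (r : R) :
    (descPochhammer R (ℓ + j)).eval r =
      (descPochhammer R ℓ).eval r * (descPochhammer R j).eval (r - ℓ) := by
  rw [← descPochhammer_mul, eval_mul, eval_comp, eval_sub, eval_X, eval_natCast]

theorem det_descPochhammer_add_eval {R : Type*} [CommRing R] [IsDomain R] {n : ℕ} (ℓ : ℕ)
    (v : Fin n → R) :
    (of fun i j : Fin n => (descPochhammer R (ℓ + j)).eval (v i)).det =
      (∏ i, (descPochhammer R ℓ).eval (v i)) * (vandermonde fun i => v i - ℓ).det := by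
  simp only [descPochhammer_add_eval_eq_mul]
  refine (det_mul_column (fun i => (descPochhammer R ℓ).eval (v i))
    (of fun i j : Fin n => (descPochhammer R j).eval (v i - ℓ))).trans ?_
  rw [det_eval_matrixOfPolynomials_eq_det_vandermonde _ (fun j => descPochhammer R j)
    (fun j => descPochhammer_natDegree R j) (fun j => monic_descPochhammer R j)]

theorem natCast_div_ne_natCast {K : Type*} [DivisionRing K] [CharZero K] {a d : ℕ} (hd : d ≠ 0)
    (had : ¬ d ∣ a) (k : ℕ) : (a : K) / d ≠ k := by
  rw [Ne, div_eq_iff (Nat.cast_ne_zero.2 hd)]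
  intro h
  exact had ⟨k, by rw [mul_comm]; exact_mod_cast h⟩

theorem det_binomial_matrix_ne_zero_general (d : ℕ) (hd : 2 ≤ d)
    (n : ℕ) (δ : Fin n → ℕ) (hδ : StrictMono δ)
    (hdvd : ∀ i, ¬ d ∣ δ i) (ℓ : ℕ) :
    (Matrix.of fun i j : Fin n =>
      qBinom ((δ i : ℚ) / (d : ℚ)) (ℓ + (j : ℕ))).det ≠ 0 := by
  have hd0 : d ≠ 0 := by omega
  set x : Fin n → ℚ := fun i => (δ i : ℚ) / d
  have hx_inj : Function.Injective fun i => x i - ℓ := fun a b hab => by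
    have : (δ a : ℚ) = δ b := (div_left_inj' (Nat.cast_ne_zero.2 hd0)).1 (sub_left_inj.1 hab)
    exact hδ.injective (Nat.cast_injective this)
  have hrows : ∏ i, (descPochhammer ℚ ℓ).eval (x i) ≠ 0 :=
    Finset.prod_ne_zero_iff.2 fun i _ =>
      descPochhammer_eval_ne_zero (natCast_div_ne_natCast hd0 (hdvd i)) ℓ
  have hcols : ∏ j : Fin n, ((ℓ + j : ℕ).factorial : ℚ)⁻¹ ≠ 0 :=
    Finset.prod_ne_zero_iff.2 fun j _ => inv_ne_zero (Nat.cast_ne_zero.2 (Nat.factorial_ne_zero _))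
  simp only [qBinom_eq_inv_factorial_mul_descPochhammer_eval]
  refine (det_mul_row (fun j : Fin n => ((ℓ + j : ℕ).factorial : ℚ)⁻¹)
    (of fun i j : Fin n => (descPochhammer ℚ (ℓ + j)).eval (x i))).trans_ne ?_
  rw [det_descPochhammer_add_eval]
  exact mul_ne_zero hcols (mul_ne_zero hrows (det_vandermonde_ne_zero_iff.2 hx_inj))

/-- Let `d ≥ 2`, let `δ_1 < δ_2 < ⋯ < δ_n` be positive integers none of which is divisible
by `d`, and let `ℓ ≥ 0`.  Then the determinant of the `n × n` rational matrix with `(i,j)`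
entry `binom(δ_i/d, ℓ+j-1)` is nonzero. -/
theorem det_binomial_matrix_ne_zero (d : ℕ) (hd : 2 ≤ d)
    (n : ℕ) (δ : Fin n → ℕ) (hδ : StrictMono δ)
    (hpos : ∀ i, 0 < δ i) (hdvd : ∀ i, ¬ d ∣ δ i) (ℓ : ℕ) :
    (Matrix.of fun i j : Fin n =>
      qBinom ((δ i : ℚ) / (d : ℚ)) (ℓ + (j : ℕ))).det ≠ 0 :=
  det_binomial_matrix_ne_zero_general d hd n δ hδ hdvd ℓ
end

section
/- Let p be a prime, let d ≥ 2 be an integer not divisible by p, and let N be an integer with 2 ≤ N < p. Let δ_1 < δ_2 < ⋯ < δ_n be integers with 1 ≤ δ_i ≤ N and d ∤ δ_i for all i, set m = ⌊N/d⌋ + 1, and assume m + n ≤ N. Then the determinant of the n × n rational matrix with (i,j) entry binom(δ_i/d, m + j − 1), where binom(x,k) := x(x−1)⋯(x−k+1)/k!, is a nonzero rational number whose p-adic valuation is 0 (i.e., it is a p-adic unit). -/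
/-!
Pulling the factor `(m+j)!⁻¹` out of column `j` and the common factor `x(x-1)⋯(x-m+1)` out of
row `i`, the remaining entry in position `(i, j)` is the monic degree-`j` polynomial
`(X-m)(X-m-1)⋯(X-m-j+1)` evaluated at `x_i = δ_i/d`, so the determinant is a Vandermonde
determinant. Every factor is then a `p`-adic unit: the factorials are `(m+j)!` with `m+j < p`,
and the linear factors are `(a - b)/d` with `a ≠ b` naturals below `p`.
-/

open Finset Polynomial

section PadicUnits

variable (p : ℕ) [Fact p.Prime]

def padicUnitSubmonoid : Submonoid ℚ where
  carrier := {x | x ≠ 0 ∧ padicValRat p x = 0}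
  mul_mem' {a b} ha hb :=
    ⟨mul_ne_zero ha.1 hb.1, by rw [padicValRat.mul ha.1 hb.1, ha.2, hb.2, add_zero]⟩
  one_mem' := ⟨one_ne_zero, padicValRat.one⟩

variable {p}

theorem mem_padicUnitSubmonoid {x : ℚ} :
    x ∈ padicUnitSubmonoid p ↔ x ≠ 0 ∧ padicValRat p x = 0 :=
  Iff.rfl

theorem inv_mem_padicUnitSubmonoid {x : ℚ} (hx : x ∈ padicUnitSubmonoid p) :
    x⁻¹ ∈ padicUnitSubmonoid p :=
  ⟨inv_ne_zero hx.1, by rw [padicValRat.inv, hx.2, neg_zero]⟩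

theorem div_mem_padicUnitSubmonoid {x y : ℚ} (hx : x ∈ padicUnitSubmonoid p)
    (hy : y ∈ padicUnitSubmonoid p) : x / y ∈ padicUnitSubmonoid p := by
  rw [div_eq_mul_inv]
  exact mul_mem hx (inv_mem_padicUnitSubmonoid hy)

theorem intCast_mem_padicUnitSubmonoid {z : ℤ} (hz : ¬ (p : ℤ) ∣ z) :
    (z : ℚ) ∈ padicUnitSubmonoid p :=
  ⟨Int.cast_ne_zero.mpr (by rintro rfl; exact hz (dvd_zero _)), by
    rw [padicValRat.of_int, padicValInt.eq_zero_of_not_dvd hz, Nat.cast_zero]⟩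

theorem natCast_mem_padicUnitSubmonoid {k : ℕ} (hk : ¬ p ∣ k) :
    (k : ℚ) ∈ padicUnitSubmonoid p := by
  exact_mod_cast intCast_mem_padicUnitSubmonoid (p := p) (z := k) (by exact_mod_cast hk)

theorem factorial_mem_padicUnitSubmonoid {k : ℕ} (hk : k < p) :
    (k.factorial : ℚ) ∈ padicUnitSubmonoid p :=
  natCast_mem_padicUnitSubmonoid <| by rw [(Fact.out : p.Prime).dvd_factorial]; omega

theorem div_sub_div_mem_padicUnitSubmonoid {a b d : ℕ} (hab : a ≠ b) (ha : a < p) (hb : b < p)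
    (hd : ¬ p ∣ d) : (a / d - b / d : ℚ) ∈ padicUnitSubmonoid p := by
  have hsub : ¬ (p : ℤ) ∣ (a - b : ℤ) := fun hdvd =>
    hab <| by have := Int.eq_zero_of_abs_lt_dvd hdvd (by rw [abs_lt]; omega); omega
  rw [div_sub_div_same]
  exact_mod_cast div_mem_padicUnitSubmonoid (intCast_mem_padicUnitSubmonoid hsub)
    (natCast_mem_padicUnitSubmonoid hd)

end PadicUnits

theorem qBinom_add (x : ℚ) (m j : ℕ) :
    qBinom x (m + j) = ((m + j).factorial : ℚ)⁻¹ *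
      ((∏ k ∈ range m, (x - k)) * ∏ t ∈ range j, (x - (m + t : ℕ))) := by
  rw [qBinom, prod_range_add, div_eq_inv_mul]

theorem det_qBinom_eq (n m : ℕ) (x : Fin n → ℚ) :
    (Matrix.of fun i j : Fin n => qBinom (x i) (m + j)).det =
      (∏ j : Fin n, ((m + j : ℕ).factorial : ℚ)⁻¹) *
        ((∏ i : Fin n, ∏ k ∈ range m, (x i - k)) *
          ∏ i : Fin n, ∏ j ∈ Ioi i, (x j - x i)) := by
  let q : Fin n → ℚ[X] := fun j => ∏ t ∈ range j, (X - C ((m + t : ℕ) : ℚ))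
  have hq_monic (j : Fin n) : (q j).Monic := monic_prod_of_monic _ _ fun t _ => monic_X_sub_C _
  have hq_natDegree (j : Fin n) : (q j).natDegree = j := by
    rw [natDegree_prod_of_monic _ _ fun t _ => monic_X_sub_C _]
    simp only [natDegree_X_sub_C, sum_const, card_range, smul_eq_mul, mul_one]
  have hentry (i j : Fin n) : qBinom (x i) (m + j) = ((m + j : ℕ).factorial : ℚ)⁻¹ *
      ((∏ k ∈ range m, (x i - k)) * (q j).eval (x i)) := by
    simp [qBinom_add, q, eval_prod]
  calc (Matrix.of fun i j : Fin n => qBinom (x i) (m + j)).det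
      = (Matrix.of fun i j : Fin n => ((m + j : ℕ).factorial : ℚ)⁻¹ *
          ((∏ k ∈ range m, (x i - k)) * (q j).eval (x i))).det := by simp_rw [hentry]
    _ = (∏ j : Fin n, ((m + j : ℕ).factorial : ℚ)⁻¹) *
        ((∏ i : Fin n, ∏ k ∈ range m, (x i - k)) *
          (Matrix.of fun i j : Fin n => (q j).eval (x i)).det) :=
      (Matrix.det_mul_row _ _).trans (congrArg _ (Matrix.det_mul_column _ _))
    _ = _ := by
      rw [← Matrix.det_eval_matrixOfPolynomials_eq_det_vandermonde x q hq_natDegree hq_monic,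
        Matrix.det_vandermonde]

theorem det_binomial_matrix_padic_unit_general (p : ℕ) (hp : p.Prime)
    (d : ℕ) (hpd : ¬ p ∣ d)
    (N : ℕ) (hNp : N < p)
    (n : ℕ) (δ : Fin n → ℕ) (hδ : StrictMono δ)
    (hδN : ∀ i, δ i ≤ N) (hdvd : ∀ i, ¬ d ∣ δ i)
    (hmn : N / d + 1 + n ≤ N) :
    (Matrix.of fun i j : Fin n =>
        qBinom ((δ i : ℚ) / (d : ℚ)) (N / d + 1 + (j : ℕ))).det ≠ 0 ∧
      padicValRat p (Matrix.of fun i j : Fin n =>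
        qBinom ((δ i : ℚ) / (d : ℚ)) (N / d + 1 + (j : ℕ))).det = 0 := by
  have : Fact p.Prime := ⟨hp⟩
  have hd : d ≠ 0 := by rintro rfl; exact hpd (dvd_zero p)
  rw [← mem_padicUnitSubmonoid, det_qBinom_eq]
  refine mul_mem (prod_mem fun j _ => ?_) (mul_mem (prod_mem fun i _ => prod_mem fun k hk => ?_)
    (prod_mem fun i _ => prod_mem fun j hj => ?_))
  · exact inv_mem_padicUnitSubmonoid (factorial_mem_padicUnitSubmonoid (by have := j.isLt; omega))
  · have hkd : k * d ≤ N :=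
      (Nat.le_div_iff_mul_le (Nat.pos_of_ne_zero hd)).mp (Nat.le_of_lt_succ (mem_range.mp hk))
    have hne : δ i ≠ k * d := fun h => hdvd i ⟨k, by rw [h, mul_comm]⟩
    rw [show (k : ℚ) = (k * d : ℕ) / d by push_cast; field_simp]
    exact div_sub_div_mem_padicUnitSubmonoid hne ((hδN i).trans_lt hNp) (hkd.trans_lt hNp) hpd
  · exact div_sub_div_mem_padicUnitSubmonoid (hδ (mem_Ioi.mp hj)).ne'
      ((hδN j).trans_lt hNp) ((hδN i).trans_lt hNp) hpd

/-- Let `p` be a prime, `d ≥ 2` an integer not divisible by `p`, and `N` an integer with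
`2 ≤ N < p`.  Let `δ_1 < δ_2 < ⋯ < δ_n` be integers with `1 ≤ δ_i ≤ N` and `d ∤ δ_i`, set
`m = ⌊N/d⌋ + 1`, and assume `m + n ≤ N`.  Then the determinant of the `n × n` rational
matrix with `(i,j)` entry `binom(δ_i/d, m+j-1)` is a nonzero rational number of `p`-adic
valuation `0` (a `p`-adic unit). -/
theorem det_binomial_matrix_padic_unit (p : ℕ) (hp : p.Prime)
    (d : ℕ) (hd : 2 ≤ d) (hpd : ¬ p ∣ d)
    (N : ℕ) (hN2 : 2 ≤ N) (hNp : N < p)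
    (n : ℕ) (δ : Fin n → ℕ) (hδ : StrictMono δ)
    (hδ1 : ∀ i, 1 ≤ δ i) (hδN : ∀ i, δ i ≤ N) (hdvd : ∀ i, ¬ d ∣ δ i)
    (hmn : N / d + 1 + n ≤ N) :
    (Matrix.of fun i j : Fin n =>
        qBinom ((δ i : ℚ) / (d : ℚ)) (N / d + 1 + (j : ℕ))).det ≠ 0 ∧
      padicValRat p (Matrix.of fun i j : Fin n =>
        qBinom ((δ i : ℚ) / (d : ℚ)) (N / d + 1 + (j : ℕ))).det = 0 :=
  det_binomial_matrix_padic_unit_general p hp d hpd N hNp n δ hδ hδN hdvd hmn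
end
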